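/- arXiv:2411.13416 — 4 statements merged into one kernel-verified Lean document; each statement's English description precedes it below -/
import Mathlib

section
/- For every integer t ≥ 2^64, the number of graphs on the labeled vertex set [t] that satisfy property 𝒫 is at least (3/4)·2^(binom(t,2)). Equivalently, the random graph G(t,1/2) satisfies property 𝒫 with probability at least 3/4. -/
open Finset
open scoped Classical

/-- `P(X,Y)`: the number of unordered pairs `{x,y}` with `x ≠ y`, `x ∈ X`, `y ∈ Y`. -/
noncomputable def pairCount {V : Type*} (X Y : Finset V) : ℕ :=
  (((X ×ˢ Y).filter fun p => p.1 ≠ p.2).image fun p => ({p.1, p.2} : Finset V)).card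

/-- `e(X,Y)`: the number of edges `{x,y}` of `G` with `x ∈ X` and `y ∈ Y`. -/
noncomputable def edgeCount {V : Type*} (G : SimpleGraph V) (X Y : Finset V) : ℕ :=
  (((X ×ˢ Y).filter fun p => G.Adj p.1 p.2).image fun p => ({p.1, p.2} : Finset V)).card

/-- Property 𝒫: for all `X, Y` of size at least `√t` (where `t` is the number of
vertices), `|e(X,Y)/P(X,Y) − 1/2| < t^(−1/8)`. -/
def PropertyP {V : Type*} [Fintype V] (G : SimpleGraph V) : Prop :=
  ∀ X Y : Finset V,
    Real.sqrt (Fintype.card V) ≤ X.card → Real.sqrt (Fintype.card V) ≤ Y.card →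
    |(edgeCount G X Y : ℝ) / (pairCount X Y : ℝ) - 1 / 2| <
      (Fintype.card V : ℝ) ^ (-(1 / 8 : ℝ))

/-!
A union bound over the pairs `(X, Y)`, each handled by a Chernoff bound. For a set `S` of `P`
vertex pairs, at most `2 ^ (M + 1) * exp (-2 ε² P)` of the `2 ^ M` graphs (`M = t.choose 2`)
have a number of edges in `S` at distance at least `ε P` from `P / 2`. Writing `t = r ^ 8`, so
that `ε = 1 / r` and `√t = r ^ 4`, sets of size at least `r ^ 4` satisfy
`2 ε² P(X, Y) ≥ r² (|X| + |Y|) / 4`; the union bound thus factorises as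
`2 ^ (M + 1) * (∑_X exp (-r² |X| / 4)) ^ 2`, and the inner sum is at most
`(1 + exp (-r² / 4)) ^ t - 1 ≤ exp (t * exp (-r² / 4)) - 1 ≤ 1 / 4`.
-/

open Real

theorem Sym2.toFinset_injective {α : Type*} [DecidableEq α] :
    Function.Injective (Sym2.toFinset : Sym2 α → Finset α) :=
  fun _ _ h => Sym2.ext fun x => by rw [← Sym2.mem_toFinset, h, Sym2.mem_toFinset]

section PairSym

variable {V : Type*}

noncomputable def pairSym (X Y : Finset V) : Finset (Sym2 V) :=
  ((X ×ˢ Y).filter fun p => p.1 ≠ p.2).image fun p => s(p.1, p.2)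

lemma card_image_doubleton_eq_card_image_sym2Mk (T : Finset (V × V)) :
    #(T.image fun p => ({p.1, p.2} : Finset V)) = #(T.image fun p => s(p.1, p.2)) := by
  rw [← card_image_of_injective _ Sym2.toFinset_injective, image_image]
  congr 2
  funext p
  exact Sym2.toFinset_mk_eq.symm

lemma pairCount_eq_card_pairSym (X Y : Finset V) : pairCount X Y = #(pairSym X Y) :=
  card_image_doubleton_eq_card_image_sym2Mk _

lemma edgeCount_eq_card_inter_pairSym [Fintype V] (G : SimpleGraph V) (X Y : Finset V) :
    edgeCount G X Y = #(G.edgeFinset ∩ pairSym X Y) := by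
  rw [edgeCount, card_image_doubleton_eq_card_image_sym2Mk, pairSym]
  congr 1
  ext e
  simp only [mem_image, mem_filter, mem_inter, SimpleGraph.mem_edgeFinset]
  constructor
  · rintro ⟨p, ⟨hp, hadj⟩, rfl⟩
    exact ⟨hadj, p, ⟨hp, hadj.ne⟩, rfl⟩
  · rintro ⟨he, p, ⟨hp, -⟩, rfl⟩
    exact ⟨p, ⟨hp, he⟩, rfl⟩

lemma card_mul_card_le_two_mul_card_pairSym_add (X Y : Finset V) :
    #X * #Y ≤ 2 * #(pairSym X Y) + #Y := by
  have hsplit := card_filter_add_card_filter_not (s := X ×ˢ Y) fun p => p.1 ≠ p.2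
  rw [card_product] at hsplit
  set T := (X ×ˢ Y).filter fun p => p.1 ≠ p.2
  have hoff : #T ≤ 2 * #(pairSym X Y) := by
    refine card_le_mul_card_image T 2 fun e _ => ?_
    induction e using Sym2.inductionOn with
    | hf x y =>
      calc #{p ∈ T | s(p.1, p.2) = s(x, y)} ≤ #({(x, y), (y, x)} : Finset (V × V)) := by
            refine card_le_card fun p hp => ?_
            rcases Sym2.eq_iff.mp (mem_filter.mp hp).2 with ⟨h1, h2⟩ | ⟨h1, h2⟩ <;>
              simp [Prod.ext_iff, h1, h2]
        _ ≤ 2 := card_le_two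
  have hdiag : #((X ×ˢ Y).filter fun p => ¬p.1 ≠ p.2) ≤ #Y :=
    card_le_card_of_injOn Prod.snd (fun p hp => (mem_product.mp (mem_filter.mp hp).1).2)
      fun p hp q hq hpq => by
        simp only [coe_filter, Set.mem_ofPred_eq, not_not] at hp hq
        exact Prod.ext (hp.2.trans (hpq.trans hq.2.symm)) hpq
  omega

end PairSym

lemma card_powerset_filter_card_inter {α : Type*} [DecidableEq α] {D S : Finset α} (hS : S ⊆ D)
    (k : ℕ) : #{s ∈ D.powerset | #(s ∩ S) = k} = (#S).choose k * 2 ^ (#D - #S) := by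
  rw [← card_powersetCard, ← card_sdiff_of_subset hS, ← card_powerset, ← card_product]
  refine card_nbij' (fun s => (s ∩ S, s \ S)) (fun p => p.1 ∪ p.2) ?_ ?_ ?_ ?_
  · intro s hs
    simp only [coe_filter, mem_powerset, Set.mem_ofPred_eq] at hs
    simp only [coe_product, Set.mem_prod, mem_coe, mem_powersetCard, mem_powerset]
    exact ⟨⟨inter_subset_right, hs.2⟩, sdiff_subset_sdiff hs.1 subset_rfl⟩
  · rintro ⟨a, b⟩ h
    simp only [coe_product, Set.mem_prod, mem_coe, mem_powersetCard, mem_powerset] at h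
    simp only [coe_filter, mem_powerset, Set.mem_ofPred_eq]
    refine ⟨union_subset (h.1.1.trans hS) (h.2.trans sdiff_subset), ?_⟩
    rw [union_inter_distrib_right, inter_eq_left.mpr h.1.1,
      disjoint_iff_inter_eq_empty.mp (disjoint_of_subset_left h.2 sdiff_disjoint), union_empty,
      h.1.2]
  · intro s _
    exact (union_comm _ _).trans (sdiff_union_inter s S)
  · rintro ⟨a, b⟩ h
    simp only [coe_product, Set.mem_prod, mem_coe, mem_powersetCard, mem_powerset] at h
    have hb : Disjoint b S := disjoint_of_subset_left h.2 sdiff_disjoint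
    simp only [union_inter_distrib_right, inter_eq_left.mpr h.1.1,
      disjoint_iff_inter_eq_empty.mp hb, union_empty, union_sdiff_distrib,
      sdiff_eq_empty_iff_subset.mpr h.1.1, sdiff_eq_self_of_disjoint hb, empty_union]

section GraphCount

variable {V : Type*} [Fintype V]

lemma edgeFinset_fromEdgeSet {s : Finset (Sym2 V)}
    [Fintype (SimpleGraph.fromEdgeSet (s : Set (Sym2 V))).edgeSet]
    (hs : s ⊆ (⊤ : SimpleGraph V).edgeFinset) :
    (SimpleGraph.fromEdgeSet (s : Set (Sym2 V))).edgeFinset = s := by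
  rw [← coe_inj, SimpleGraph.coe_edgeFinset, SimpleGraph.edgeSet_fromEdgeSet, sdiff_eq_left,
    ← Set.subset_compl_iff_disjoint_right, ← SimpleGraph.edgeSet_top,
    ← SimpleGraph.coe_edgeFinset]
  exact_mod_cast hs

lemma card_filter_edgeFinset (p : Finset (Sym2 V) → Prop) [DecidablePred p] :
    #{G : SimpleGraph V | p G.edgeFinset}
      = #{s ∈ (⊤ : SimpleGraph V).edgeFinset.powerset | p s} := by
  refine card_nbij' (fun G => G.edgeFinset) (fun s => SimpleGraph.fromEdgeSet s) ?_ ?_ ?_ ?_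
  · intro G hG
    simp only [coe_filter, mem_univ, true_and, Set.mem_ofPred_eq] at hG
    simp only [coe_filter, mem_powerset, Set.mem_ofPred_eq]
    exact ⟨SimpleGraph.edgeFinset_mono le_top, hG⟩
  · intro s hs
    simp only [coe_filter, mem_powerset, Set.mem_ofPred_eq] at hs
    simp only [coe_filter, mem_univ, true_and, Set.mem_ofPred_eq]
    convert hs.2
    convert edgeFinset_fromEdgeSet hs.1
  · intro G _
    simp
  · intro s hs
    simp only [coe_filter, mem_powerset, Set.mem_ofPred_eq] at hs
    convert edgeFinset_fromEdgeSet hs.1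

lemma card_filter_card_edgeFinset_inter {S : Finset (Sym2 V)}
    (hS : S ⊆ (⊤ : SimpleGraph V).edgeFinset) (k : ℕ) :
    #{G : SimpleGraph V | #(G.edgeFinset ∩ S) = k}
      = (#S).choose k * 2 ^ ((Fintype.card V).choose 2 - #S) := by
  rw [card_filter_edgeFinset fun s => #(s ∩ S) = k, card_powerset_filter_card_inter hS,
    SimpleGraph.card_edgeFinset_top_eq_card_choose_two]

lemma card_simpleGraph : Fintype.card (SimpleGraph V) = 2 ^ (Fintype.card V).choose 2 := by
  have h := card_filter_edgeFinset (V := V) fun _ => True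
  simp only [filter_true, card_univ, card_powerset] at h
  rwa [SimpleGraph.card_edgeFinset_top_eq_card_choose_two] at h

end GraphCount

section BinomialTail

lemma sum_choose_mul_exp_eq (n : ℕ) (l : ℝ) :
    ∑ k ∈ range (n + 1), (n.choose k : ℝ) * exp (l * (k - n / 2))
      = (2 * cosh (l / 2)) ^ n := by
  rw [cosh_eq, mul_div_cancel₀ _ two_ne_zero, add_pow]
  refine sum_congr rfl fun k hk => ?_
  rw [← exp_nat_mul, ← exp_nat_mul, ← exp_add,
    Nat.cast_sub (Nat.lt_succ_iff.mp (mem_range.mp hk)), mul_comm]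
  congr 2
  ring

lemma sum_choose_mul_exp_le (n : ℕ) (l : ℝ) :
    ∑ k ∈ range (n + 1), (n.choose k : ℝ) * exp (l * (k - n / 2))
      ≤ 2 ^ n * exp (n * l ^ 2 / 8) := by
  rw [sum_choose_mul_exp_eq, mul_div_assoc, exp_nat_mul, ← mul_pow]
  gcongr
  exact (cosh_le_exp_half_sq (l / 2)).trans_eq (congrArg exp (by ring))

lemma sum_choose_filter_le_abs_sub_half (n : ℕ) {ε : ℝ} (hε : 0 ≤ ε) :
    ∑ k ∈ (range (n + 1)).filter (fun k : ℕ => ε * n ≤ |(k : ℝ) - n / 2|), (n.choose k : ℝ)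
      ≤ 2 ^ (n + 1) * exp (-2 * ε ^ 2 * n) := by
  set w : ℕ → ℝ := fun k => exp (4 * ε * (k - n / 2)) + exp (-4 * ε * (k - n / 2))
  -- `exp |a| ≤ exp a + exp (-a)` treats both tails at once.
  have hw : ∀ k : ℕ, ε * n ≤ |(k : ℝ) - n / 2| → 1 ≤ exp (-(4 * ε ^ 2 * n)) * w k := by
    intro k hk
    calc 1 = exp (-(4 * ε ^ 2 * n)) * exp (4 * ε ^ 2 * n) := by
          rw [← exp_add, neg_add_cancel, exp_zero]
      _ ≤ exp (-(4 * ε ^ 2 * n)) * exp |4 * ε * (k - n / 2)| := by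
          rw [abs_mul, abs_of_nonneg (by positivity : 0 ≤ 4 * ε)]
          gcongr _ * exp ?_
          nlinarith
      _ ≤ exp (-(4 * ε ^ 2 * n)) * w k := by
          gcongr
          simpa only [w, neg_mul] using exp_abs_le _
  calc ∑ k ∈ (range (n + 1)).filter (fun k : ℕ => ε * n ≤ |(k : ℝ) - n / 2|), (n.choose k : ℝ)
      ≤ ∑ k ∈ (range (n + 1)).filter (fun k : ℕ => ε * n ≤ |(k : ℝ) - n / 2|),
          (n.choose k : ℝ) * (exp (-(4 * ε ^ 2 * n)) * w k) :=
        sum_le_sum fun k hk =>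
          le_mul_of_one_le_right (by positivity) (hw k (mem_filter.mp hk).2)
    _ ≤ ∑ k ∈ range (n + 1), (n.choose k : ℝ) * (exp (-(4 * ε ^ 2 * n)) * w k) :=
        sum_le_sum_of_subset_of_nonneg (filter_subset _ _) fun k _ _ => by positivity
    _ = exp (-(4 * ε ^ 2 * n)) *
          (∑ k ∈ range (n + 1), (n.choose k : ℝ) * exp (4 * ε * (k - n / 2))
            + ∑ k ∈ range (n + 1), (n.choose k : ℝ) * exp (-4 * ε * (k - n / 2))) := by
        rw [← sum_add_distrib, mul_sum]
        exact sum_congr rfl fun k _ => by ring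
    _ ≤ exp (-(4 * ε ^ 2 * n)) * (2 ^ n * exp (n * (4 * ε) ^ 2 / 8)
          + 2 ^ n * exp (n * (-4 * ε) ^ 2 / 8)) := by
        gcongr <;> exact sum_choose_mul_exp_le n _
    _ = 2 ^ (n + 1) * exp (-2 * ε ^ 2 * n) := by
        have h : exp (-(4 * ε ^ 2 * n)) * exp (n * (4 * ε) ^ 2 / 8)
            = exp (-2 * ε ^ 2 * n) := by
          rw [← exp_add]
          ring_nf
        rw [show (-4 * ε) ^ 2 = (4 * ε) ^ 2 by ring, ← h]
        ring

end BinomialTail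

lemma mul_le_abs_sub_half_of_le_abs_div_sub_half {ε a b : ℝ} (hb : 0 ≤ b)
    (h : ε ≤ |a / b - 1 / 2|) : ε * b ≤ |a - b / 2| := by
  rcases hb.eq_or_lt with rfl | hb
  · simp
  · have : |a - b / 2| = |a / b - 1 / 2| * b := by
      rw [← abs_of_pos hb, ← abs_mul, abs_of_pos hb, sub_mul, div_mul_cancel₀ _ hb.ne']
      ring_nf
    rw [this]
    exact mul_le_mul_of_nonneg_right h hb.le

section Deviation

variable {V : Type*} [Fintype V]

lemma pairSym_subset_edgeFinset_top (X Y : Finset V) :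
    pairSym X Y ⊆ (⊤ : SimpleGraph V).edgeFinset := by
  intro e he
  obtain ⟨p, hp, rfl⟩ := mem_image.mp he
  simpa using (mem_filter.mp hp).2

lemma card_filter_le_abs_edgeCount_div_sub_half (X Y : Finset V) {ε : ℝ} (hε : 0 ≤ ε) :
    (#{G : SimpleGraph V | ε ≤ |(edgeCount G X Y : ℝ) / pairCount X Y - 1 / 2|} : ℝ)
      ≤ 2 ^ ((Fintype.card V).choose 2 + 1) * exp (-2 * ε ^ 2 * #(pairSym X Y)) := by
  set S := pairSym X Y
  set P := #S
  set M := (Fintype.card V).choose 2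
  set T := (range (P + 1)).filter fun k : ℕ => ε * P ≤ |(k : ℝ) - P / 2|
  set bad : Finset (SimpleGraph V) :=
    {G | ε ≤ |(edgeCount G X Y : ℝ) / pairCount X Y - 1 / 2|}
  have hcover : bad ⊆ T.biUnion fun k => {G : SimpleGraph V | #(G.edgeFinset ∩ S) = k} := by
    intro G hG
    simp only [bad, mem_filter, mem_univ, true_and, edgeCount_eq_card_inter_pairSym,
      pairCount_eq_card_pairSym] at hG
    simp only [mem_biUnion, mem_filter, mem_range, mem_univ, true_and, exists_eq_right', T]
    exact ⟨Nat.lt_succ_of_le (card_le_card inter_subset_right),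
      mul_le_abs_sub_half_of_le_abs_div_sub_half P.cast_nonneg hG⟩
  have hcount : #bad ≤ ∑ k ∈ T, P.choose k * 2 ^ (M - P) := by
    refine (card_le_card hcover).trans (card_biUnion_le.trans_eq (sum_congr rfl fun k _ => ?_))
    exact card_filter_card_edgeFinset_inter (pairSym_subset_edgeFinset_top X Y) k
  have hPM : P ≤ M := (card_le_card (pairSym_subset_edgeFinset_top X Y)).trans_eq
    SimpleGraph.card_edgeFinset_top_eq_card_choose_two
  calc (#bad : ℝ) ≤ (∑ k ∈ T, (P.choose k : ℝ)) * 2 ^ (M - P) := by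
        rw [sum_mul]
        exact_mod_cast hcount
    _ ≤ 2 ^ (P + 1) * exp (-2 * ε ^ 2 * P) * 2 ^ (M - P) := by
        gcongr
        exact sum_choose_filter_le_abs_sub_half P hε
    _ = 2 ^ (M + 1) * exp (-2 * ε ^ 2 * P) := by
        rw [mul_right_comm, ← pow_add, Nat.add_right_comm, Nat.add_sub_cancel' hPM]

end Deviation

section Numeric

lemma sum_exp_neg_mul_card_le_exp (α : Type*) [Fintype α] (c : ℝ) :
    ∑ X : Finset α, exp (-c * #X) ≤ exp (Fintype.card α * exp (-c)) := by
  have h := Fintype.sum_pow_mul_eq_add_pow α (exp (-c)) 1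
  simp only [one_pow, mul_one] at h
  calc ∑ X : Finset α, exp (-c * #X) = (exp (-c) + 1) ^ Fintype.card α := by
        rw [← h]
        exact sum_congr rfl fun X _ => by rw [mul_comm, exp_nat_mul]
    _ ≤ exp (exp (-c)) ^ Fintype.card α := by gcongr; exact add_one_le_exp _
    _ = exp (Fintype.card α * exp (-c)) := (exp_nat_mul _ _).symm

lemma pow_eight_mul_exp_neg_le {r : ℝ} (hr : 2 ^ 8 ≤ r) :
    r ^ 8 * exp (-(r ^ 2 / 4)) ≤ 1 / 5 := by
  have h6 : (r ^ 2 / 4) ^ 6 / 720 ≤ exp (r ^ 2 / 4) := by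
    simpa [Nat.factorial] using pow_div_factorial_le_exp (r ^ 2 / 4) (by positivity) 6
  have hr4 : (2 : ℝ) ^ 32 ≤ r ^ 4 := by
    calc (2 : ℝ) ^ 32 = (2 ^ 8) ^ 4 := by norm_num
      _ ≤ r ^ 4 := pow_le_pow_left₀ (by norm_num) hr 4
  rw [exp_neg, ← div_eq_mul_inv, div_le_iff₀ (exp_pos _)]
  nlinarith [pow_nonneg (sq_nonneg r) 4]

lemma sum_exp_neg_mul_card_filter_le {α : Type*} [Fintype α] {r : ℝ} (hr : 2 ^ 8 ≤ r)
    (hα : Fintype.card α ≤ r ^ 8) :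
    ∑ X : Finset α with r ^ 4 ≤ #X, exp (-(r ^ 2 / 4) * #X) ≤ 1 / 4 := by
  have hsub : ({X : Finset α | r ^ 4 ≤ #X} : Finset (Finset α)) ⊆ univ.erase ∅ := by
    intro X hX
    refine mem_erase.mpr ⟨?_, mem_univ _⟩
    rintro rfl
    simp only [mem_filter, card_empty, Nat.cast_zero] at hX
    linarith [hX.2, pow_pos (by linarith : (0 : ℝ) < r) 4]
  have hsmall : Fintype.card α * exp (-(r ^ 2 / 4)) ≤ 1 / 5 :=
    le_trans (by gcongr) (pow_eight_mul_exp_neg_le hr)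
  calc ∑ X : Finset α with r ^ 4 ≤ #X, exp (-(r ^ 2 / 4) * #X)
      ≤ ∑ X ∈ univ.erase ∅, exp (-(r ^ 2 / 4) * #X) :=
        sum_le_sum_of_subset_of_nonneg hsub fun _ _ _ => (exp_pos _).le
    _ = ∑ X : Finset α, exp (-(r ^ 2 / 4) * #X) - 1 := by
        rw [← add_sum_erase _ _ (mem_univ ∅)]
        simp
    _ ≤ exp (1 / 5) - 1 := by
        gcongr
        exact (sum_exp_neg_mul_card_le_exp α _).trans (exp_le_exp.mpr hsmall)
    _ ≤ 1 / 4 := by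
        have := exp_bound_div_one_sub_of_interval (by norm_num : (0 : ℝ) ≤ 1 / 5) (by norm_num)
        linarith [show (1 : ℝ) / (1 - 1 / 5) = 5 / 4 by norm_num]

end Numeric

section Main

variable {V : Type*} [Fintype V]

lemma card_filter_exists_le_abs_edgeCount_div_sub_half (A : Finset (Finset V)) {ε c : ℝ}
    (hε : 0 ≤ ε) (hc : ∀ X ∈ A, ∀ Y ∈ A, c * (#X + #Y) ≤ 2 * ε ^ 2 * #(pairSym X Y)) :
    (#{G : SimpleGraph V | ∃ X ∈ A, ∃ Y ∈ A,
        ε ≤ |(edgeCount G X Y : ℝ) / pairCount X Y - 1 / 2|} : ℝ)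
      ≤ 2 ^ ((Fintype.card V).choose 2 + 1) * (∑ X ∈ A, exp (-c * #X)) ^ 2 := by
  set M := (Fintype.card V).choose 2
  have hcover : ({G : SimpleGraph V | ∃ X ∈ A, ∃ Y ∈ A,
        ε ≤ |(edgeCount G X Y : ℝ) / pairCount X Y - 1 / 2|} : Finset (SimpleGraph V))
      ⊆ (A ×ˢ A).biUnion fun XY =>
        {G | ε ≤ |(edgeCount G XY.1 XY.2 : ℝ) / pairCount XY.1 XY.2 - 1 / 2|} := by
    intro G hG
    obtain ⟨X, hX, Y, hY, hdev⟩ := (mem_filter.mp hG).2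
    exact mem_biUnion.mpr
      ⟨(X, Y), mem_product.mpr ⟨hX, hY⟩, mem_filter.mpr ⟨mem_univ _, hdev⟩⟩
  calc _ ≤ ∑ XY ∈ A ×ˢ A, (#{G : SimpleGraph V |
          ε ≤ |(edgeCount G XY.1 XY.2 : ℝ) / pairCount XY.1 XY.2 - 1 / 2|} : ℝ) := by
        exact_mod_cast (card_le_card hcover).trans card_biUnion_le
    _ ≤ ∑ XY ∈ A ×ˢ A, 2 ^ (M + 1) * (exp (-c * #XY.1) * exp (-c * #XY.2)) := by
        refine sum_le_sum fun XY hXY => ?_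
        obtain ⟨hX, hY⟩ := mem_product.mp hXY
        refine (card_filter_le_abs_edgeCount_div_sub_half XY.1 XY.2 hε).trans ?_
        rw [← exp_add]
        gcongr
        linarith [hc _ hX _ hY]
    _ = 2 ^ (M + 1) * (∑ X ∈ A, exp (-c * #X)) ^ 2 := by
        rw [← mul_sum, sq, sum_mul_sum, sum_product]

lemma card_not_propertyP_le (hV : 2 ^ 64 ≤ Fintype.card V) :
    (#{G : SimpleGraph V | ¬PropertyP G} : ℝ)
      ≤ 2 ^ ((Fintype.card V).choose 2 + 1) * (1 / 4) ^ 2 := by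
  have hn0 : (0 : ℝ) ≤ Fintype.card V := by positivity
  set r := (Fintype.card V : ℝ) ^ (1 / 8 : ℝ)
  have hr8 : r ^ 8 = Fintype.card V := by rw [← rpow_natCast, ← rpow_mul hn0]; norm_num
  have hr : 2 ^ 8 ≤ r := by
    refine le_of_pow_le_pow_left₀ (by norm_num : 8 ≠ 0) (by positivity) ?_
    rw [hr8, ← pow_mul]
    exact_mod_cast hV
  have hsqrt : √(Fintype.card V : ℝ) = r ^ 4 := by
    rw [← hr8, show r ^ 8 = (r ^ 4) ^ 2 by ring, sqrt_sq (by positivity)]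
  set A : Finset (Finset V) := {X | r ^ 4 ≤ #X}
  have hbad : ({G : SimpleGraph V | ¬PropertyP G} : Finset (SimpleGraph V)) ⊆
      ({G | ∃ X ∈ A, ∃ Y ∈ A, r⁻¹ ≤ |(edgeCount G X Y : ℝ) / pairCount X Y - 1 / 2|} :
        Finset (SimpleGraph V)) := by
    intro G hG
    simp only [PropertyP, mem_filter, mem_univ, true_and, not_forall, not_lt, exists_prop,
      hsqrt, rpow_neg hn0, A] at hG ⊢
    obtain ⟨X, Y, hX, hY, hdev⟩ := hG
    exact ⟨X, hX, Y, hY, hdev⟩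
  have hc : ∀ X ∈ A, ∀ Y ∈ A, r ^ 2 / 4 * (#X + #Y) ≤ 2 * r⁻¹ ^ 2 * #(pairSym X Y) := by
    intro X hX Y hY
    simp only [A, mem_filter, mem_univ, true_and] at hX hY
    have hXY : (#X * #Y : ℝ) ≤ 2 * #(pairSym X Y) + #Y := by
      exact_mod_cast card_mul_card_le_two_mul_card_pairSym_add X Y
    rw [inv_pow, show 2 * (r ^ 2)⁻¹ * #(pairSym X Y) = 2 * #(pairSym X Y) / r ^ 2 by ring,
      le_div_iff₀ (by positivity)]
    have hr4 : 2 ≤ r ^ 4 := by nlinarith [pow_le_pow_left₀ (by norm_num) hr 4]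
    -- `r⁴ (|X| + |Y|) ≤ 2 |X| |Y| ≤ 4 (|X| - 1) |Y| ≤ 8 P(X, Y)`
    nlinarith [mul_le_mul_of_nonneg_right hX (#Y).cast_nonneg,
      mul_le_mul_of_nonneg_right hY (#X).cast_nonneg]
  calc (#{G : SimpleGraph V | ¬PropertyP G} : ℝ)
      ≤ #{G : SimpleGraph V | ∃ X ∈ A, ∃ Y ∈ A,
          r⁻¹ ≤ |(edgeCount G X Y : ℝ) / pairCount X Y - 1 / 2|} := by
        exact_mod_cast card_le_card hbad
    _ ≤ 2 ^ ((Fintype.card V).choose 2 + 1) * (∑ X ∈ A, exp (-(r ^ 2 / 4) * #X)) ^ 2 :=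
        card_filter_exists_le_abs_edgeCount_div_sub_half A (by positivity) hc
    _ ≤ 2 ^ ((Fintype.card V).choose 2 + 1) * (1 / 4) ^ 2 := by
        gcongr
        exact sum_exp_neg_mul_card_filter_le hr hr8.ge

theorem card_propertyP_ge (hV : 2 ^ 64 ≤ Fintype.card V) :
    (3 / 4 : ℝ) * 2 ^ (Fintype.card V).choose 2
      ≤ Nat.card {G : SimpleGraph V // PropertyP G} := by
  have hsplit := card_filter_add_card_filter_not (s := univ) (PropertyP (V := V))
  rw [card_univ, card_simpleGraph] at hsplit
  rw [Nat.card_eq_fintype_card, Fintype.card_subtype]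
  have hbad := card_not_propertyP_le hV
  rw [pow_succ] at hbad
  have htotal : ((#{G : SimpleGraph V | PropertyP G} : ℕ) : ℝ)
      + #{G : SimpleGraph V | ¬PropertyP G}
      = 2 ^ (Fintype.card V).choose 2 := by exact_mod_cast hsplit
  linarith

end Main

theorem stmt3 (t : ℕ) (ht : 2 ^ 64 ≤ t) :
    (3 / 4 : ℝ) * 2 ^ t.choose 2 ≤ Nat.card {G : SimpleGraph (Fin t) // PropertyP G} := by
  simpa using card_propertyP_ge (V := Fin t) (by simpa using ht)
end

section
/- For every integer n ≥ 1, if H is a graph on m = 2^(2^(4n)) vertices satisfying property 𝒫, then H ⟶ (Kₙ)^Δ: every 2-coloring of the triangles of H yields a copy of the complete graph Kₙ all of whose triangles receive the same color. -/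
/-!
Property 𝒫 with `t ^ (-1/8) ≤ 1/4` forces every set `S` of at least `√t` vertices to have edge
density above `1/4`, hence to contain a vertex with at least `|S| / 8` neighbours in `S`.
Greedily pick `v 0, v 1, …`: `v i` is such a vertex of the current pool, and the next pool is a
largest class of its neighbours `w` in the pool, classified by the colours of `{v j, v i, w}`,
`j < i`. The colour of `{v j, v k, v l}`, `j < k < l`, then depends only on `(j, k)`, and the
pool shrinks by a factor at most `2 ^ (i + 3)` per step, so `m = (2n-2).choose (n-1)` steps fit
into `2 ^ 2 ^ (4n)` vertices. Ramsey's theorem for the resulting 2-colouring of pairs of indices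
gives `n` indices on which it is constant, and their vertices form the required `Kₙ`.
-/

open Finset
open scoped Classical

/-- `H ⟶ (Kₙ)^Δ`: every 2-coloring of the triangles of `H` yields a copy of `Kₙ`
(a clique on `n` vertices) all of whose triangles receive the same color. -/
def ArrowKnTri {V : Type*} (H : SimpleGraph V) (n : ℕ) : Prop :=
  ∀ χ : Finset V → Bool, ∃ (K : Finset V) (c : Bool), H.IsNClique n K ∧
    ∀ t ⊆ K, H.IsNClique 3 t → χ t = c

lemma pairCount_self {V : Type*} (S : Finset V) : pairCount S S = (#S).choose 2 := by
  rw [pairCount, ← card_powersetCard]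
  congr 1
  ext e
  simp only [mem_image, mem_filter, mem_product, mem_powersetCard]
  constructor
  · rintro ⟨⟨a, b⟩, ⟨⟨ha, hb⟩, hne⟩, rfl⟩
    exact ⟨insert_subset ha (singleton_subset_iff.2 hb), card_pair hne⟩
  · rintro ⟨hsub, hcard⟩
    obtain ⟨a, b, hne, rfl⟩ := card_eq_two.1 hcard
    exact ⟨(a, b), ⟨⟨hsub (by simp), hsub (by simp)⟩, hne⟩, rfl⟩

lemma edgeCount_self_le_sum {V : Type*} (G : SimpleGraph V) (S : Finset V) :
    edgeCount G S S ≤ ∑ a ∈ S, #{b ∈ S | G.Adj a b} := by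
  refine card_image_le.trans (le_of_eq ?_)
  simp only [card_filter, sum_product]

lemma exists_card_le_mul_of_choose_two_lt {V : Type*} {S : Finset V} {f : V → ℕ}
    (h : (#S).choose 2 < 4 * ∑ a ∈ S, f a) : ∃ a ∈ S, #S ≤ 8 * f a := by
  by_contra! hlt
  have hsum : 8 * ∑ a ∈ S, f a ≤ #S * (#S - 1) := by
    rw [mul_sum]
    calc ∑ a ∈ S, 8 * f a ≤ ∑ _a ∈ S, (#S - 1) := sum_le_sum fun a ha => by
          have := hlt a ha; omega
      _ = #S * (#S - 1) := by rw [sum_const, smul_eq_mul]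
  have htwo : 2 * (#S).choose 2 = #S * (#S - 1) := by
    rw [Nat.choose_two_right]
    exact Nat.mul_div_cancel' (Nat.even_mul_pred_self _).two_dvd
  omega

lemma pairCount_lt_four_mul_edgeCount {V : Type*} [Fintype V] {G : SimpleGraph V}
    (hP : PropertyP G) (hε : (Fintype.card V : ℝ) ^ (-(1 / 8 : ℝ)) ≤ 1 / 4) {S : Finset V}
    (hS : Real.sqrt (Fintype.card V) ≤ #S) : pairCount S S < 4 * edgeCount G S S := by
  have hdens : 1 / 4 < (edgeCount G S S : ℝ) / pairCount S S := by
    linarith [(abs_lt.1 (hP S S hS hS)).1]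
  have hpos : (0 : ℝ) < pairCount S S := by
    -- otherwise the density is the junk value `0`
    by_contra! h0
    rw [le_antisymm h0 (Nat.cast_nonneg _), div_zero] at hdens
    norm_num at hdens
  have hlt : (pairCount S S : ℝ) < 4 * edgeCount G S S := by
    linarith [(lt_div_iff₀ hpos).1 hdens]
  exact_mod_cast hlt

lemma PropertyP.exists_mem_card_le_eight_mul_degree {V : Type*} [Fintype V]
    {G : SimpleGraph V} (hP : PropertyP G)
    (hε : (Fintype.card V : ℝ) ^ (-(1 / 8 : ℝ)) ≤ 1 / 4) {S : Finset V}
    (hS : Real.sqrt (Fintype.card V) ≤ #S) : ∃ a ∈ S, #S ≤ 8 * #{b ∈ S | G.Adj a b} := by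
  refine exists_card_le_mul_of_choose_two_lt ?_
  rw [← pairCount_self]
  exact (pairCount_lt_four_mul_edgeCount hP hε hS).trans_le
    (Nat.mul_le_mul_left 4 (edgeCount_self_le_sum G S))

section Ramsey

variable {α : Type*} [LinearOrder α]

def IsMonochromatic (c : α → α → Bool) (b : Bool) (T : Finset α) : Prop :=
  ∀ i ∈ T, ∀ j ∈ T, i < j → c i j = b

lemma isMonochromatic_singleton (c : α → α → Bool) (b : Bool) (x : α) :
    IsMonochromatic c b {x} := by
  intro i hi j hj hij
  rw [mem_singleton] at hi hj
  exact absurd (hi.trans hj.symm) hij.ne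

lemma IsMonochromatic.insert_min {c : α → α → Bool} {b : Bool} {S T : Finset α} {x : α}
    (hmono : IsMonochromatic c b T) (hT : T ⊆ {j ∈ S.erase x | c x j = b})
    (hx : ∀ j ∈ S, x ≤ j) : #(insert x T) = #T + 1 ∧ IsMonochromatic c b (insert x T) := by
  have hTx : ∀ j ∈ T, x < j ∧ c x j = b := fun j hj => by
    obtain ⟨hj', hc⟩ := mem_filter.1 (hT hj)
    exact ⟨lt_of_le_of_ne (hx j (mem_of_mem_erase hj')) (ne_of_mem_erase hj').symm, hc⟩
  refine ⟨card_insert_of_notMem fun hxT => (hTx x hxT).1.false, ?_⟩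
  intro i hi j hj hij
  rcases mem_insert.1 hi with rfl | hiT <;> rcases mem_insert.1 hj with rfl | hjT
  · exact absurd hij (lt_irrefl _)
  · exact (hTx j hjT).2
  · exact absurd hij (hTx i hiT).1.asymm
  · exact hmono i hiT j hjT hij

/-- Erdős–Szekeres form of Ramsey's theorem for 2-colourings of pairs. -/
theorem exists_isMonochromatic (c : α → α → Bool) (a b : ℕ) (S : Finset α)
    (hS : (a + b).choose a ≤ #S) :
    ∃ T ⊆ S, (#T = a + 1 ∧ IsMonochromatic c true T) ∨
      (#T = b + 1 ∧ IsMonochromatic c false T) := by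
  have hne : S.Nonempty := card_pos.1 ((Nat.choose_pos (by omega)).trans_le hS)
  induction a generalizing b S with
  | zero =>
    obtain ⟨x, hx⟩ := hne
    exact ⟨{x}, singleton_subset_iff.2 hx, .inl ⟨card_singleton x,
      isMonochromatic_singleton c _ x⟩⟩
  | succ a iha =>
    induction b generalizing S with
    | zero =>
      obtain ⟨x, hx⟩ := hne
      exact ⟨{x}, singleton_subset_iff.2 hx, .inr ⟨card_singleton x,
        isMonochromatic_singleton c _ x⟩⟩
    | succ b ihb =>
      set x := S.min' hne
      have hxS : x ∈ S := S.min'_mem hne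
      have hmin : ∀ j ∈ S, x ≤ j := fun j hj => S.min'_le j hj
      set St := {j ∈ S.erase x | c x j = true}
      set Sf := {j ∈ S.erase x | c x j = false}
      have hsplit : #St + #Sf + 1 = #S := by
        have := card_filter_add_card_filter_not (s := S.erase x) (fun j => c x j = true)
        simp only [Bool.not_eq_true] at this
        rw [← card_erase_add_one hxS, ← this]
      have hpascal : (a + 1 + (b + 1)).choose (a + 1) =
          (a + (b + 1)).choose a + (a + 1 + b).choose (a + 1) := by
        rw [show a + 1 + (b + 1) = a + 1 + b + 1 by omega, Nat.choose_succ_succ',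
          show a + 1 + b = a + (b + 1) by omega]
      have hSt : St ⊆ S := (filter_subset _ _).trans (erase_subset _ _)
      have hSf : Sf ⊆ S := (filter_subset _ _).trans (erase_subset _ _)
      by_cases hbig : (a + (b + 1)).choose a ≤ #St
      · obtain ⟨T, hT, ⟨hcard, hmono⟩ | hfalse⟩ :=
          iha (b + 1) St hbig (card_pos.1 ((Nat.choose_pos (by omega)).trans_le hbig))
        · obtain ⟨hcard', hmono'⟩ := hmono.insert_min hT hmin
          exact ⟨insert x T, insert_subset hxS (hT.trans hSt), .inl ⟨by omega, hmono'⟩⟩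
        · exact ⟨T, hT.trans hSt, .inr hfalse⟩
      · have hbig' : (a + 1 + b).choose (a + 1) ≤ #Sf := by omega
        obtain ⟨T, hT, htrue | ⟨hcard, hmono⟩⟩ :=
          ihb Sf hbig' (card_pos.1 ((Nat.choose_pos (by omega)).trans_le hbig'))
        · exact ⟨T, hT.trans hSf, .inl htrue⟩
        · obtain ⟨hcard', hmono'⟩ := hmono.insert_min hT hmin
          exact ⟨insert x T, insert_subset hxS (hT.trans hSf), .inr ⟨by omega, hmono'⟩⟩

theorem exists_isMonochromatic_of_centralBinom_le (c : α → α → Bool) {k : ℕ} {S : Finset α}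
    (hS : k.centralBinom ≤ #S) : ∃ T ⊆ S, ∃ b, #T = k + 1 ∧ IsMonochromatic c b T := by
  rw [Nat.centralBinom_eq_two_mul_choose, two_mul] at hS
  obtain ⟨T, hT, h | h⟩ := exists_isMonochromatic c k k S hS
  exacts [⟨T, hT, true, h⟩, ⟨T, hT, false, h⟩]

end Ramsey

lemma exists_card_le_mul_card_fiber {α β : Type*} [Fintype β] [Nonempty β] [DecidableEq β]
    (S : Finset α) (f : α → β) : ∃ y, #S ≤ Fintype.card β * #{x ∈ S | f x = y} := by
  have hβ : (0 : ℚ) < Fintype.card β := by exact_mod_cast Fintype.card_pos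
  obtain ⟨y, -, hy⟩ := exists_le_card_fiber_of_nsmul_le_card_of_maps_to (s := S) (t := univ)
    (f := f) (b := (#S : ℚ) / Fintype.card β) (fun _ _ => mem_univ _) univ_nonempty
    (by rw [card_univ, nsmul_eq_mul, mul_div_cancel₀ _ hβ.ne'])
  exact ⟨y, by exact_mod_cast (div_le_iff₀' hβ).1 hy⟩

section EndHomogeneous

variable {V : Type*} [DecidableEq V] (H : SimpleGraph V) (χ : Finset V → Bool)

/-- The first `i` terms of `v` form a clique whose triangles `{v j, v k, ·}`, `j < k`, have
colour `g j k`, also when the third vertex is taken from the pool `S` of candidates for the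
next terms. -/
structure IsEndHomogeneous (i : ℕ) (v : ℕ → V) (g : ℕ → ℕ → Bool) (S : Finset V) :
    Prop where
  adj : ∀ j k, j < k → k < i → H.Adj (v j) (v k)
  adj_pool : ∀ j < i, ∀ w ∈ S, H.Adj (v j) w
  color_pool : ∀ j k, j < k → k < i → ∀ w ∈ S, χ {v j, v k, w} = g j k
  color : ∀ j k l, j < k → k < l → l < i → χ {v j, v k, v l} = g j k

variable {H χ} {i : ℕ} {v : ℕ → V} {g : ℕ → ℕ → Bool} {S : Finset V}

lemma isEndHomogeneous_zero : IsEndHomogeneous H χ 0 v g S :=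
  ⟨by omega, by omega, by omega, by omega⟩

lemma IsEndHomogeneous.update (h : IsEndHomogeneous H χ i v g S) {a : V} (ha : a ∈ S)
    {S' : Finset V} (hS' : S' ⊆ S) (hadj : ∀ w ∈ S', H.Adj a w) {z : ℕ → Bool}
    (hz : ∀ w ∈ S', ∀ j < i, χ {v j, a, w} = z j) :
    IsEndHomogeneous H χ (i + 1) (Function.update v i a)
      (fun j k => if k = i then z j else g j k) S' := by
  have hv : ∀ j < i, Function.update v i a j = v j := fun j hj =>
    Function.update_of_ne hj.ne _ _
  have hvi : Function.update v i a i = a := Function.update_self _ _ _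
  constructor
  · intro j k hjk hk
    rcases (Nat.lt_succ_iff_lt_or_eq.1 hk) with hk | rfl
    · rw [hv j (hjk.trans hk), hv k hk]; exact h.adj j k hjk hk
    · rw [hv j hjk, hvi]; exact h.adj_pool j hjk a ha
  · intro j hj w hw
    rcases (Nat.lt_succ_iff_lt_or_eq.1 hj) with hj | rfl
    · rw [hv j hj]; exact h.adj_pool j hj w (hS' hw)
    · rw [hvi]; exact hadj w hw
  · intro j k hjk hk w hw
    rcases (Nat.lt_succ_iff_lt_or_eq.1 hk) with hk | rfl
    · rw [hv j (hjk.trans hk), hv k hk, if_neg hk.ne]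
      exact h.color_pool j k hjk hk w (hS' hw)
    · rw [hv j hjk, hvi, if_pos rfl]; exact hz w hw j hjk
  · intro j k l hjk hkl hl
    rcases (Nat.lt_succ_iff_lt_or_eq.1 hl) with hl | rfl
    · rw [hv j (hjk.trans (hkl.trans hl)), hv k (hkl.trans hl), hv l hl,
        if_neg (hkl.trans hl).ne]
      exact h.color j k l hjk hkl hl
    · rw [hv j (hjk.trans hkl), hv k hkl, hvi, if_neg hkl.ne]
      exact h.color_pool j k hjk hkl a ha

lemma IsEndHomogeneous.exists_update (h : IsEndHomogeneous H χ i v g S) {a : V}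
    (ha : a ∈ S) :
    ∃ g' S', IsEndHomogeneous H χ (i + 1) (Function.update v i a) g' S' ∧
      #{w ∈ S | H.Adj a w} ≤ 2 ^ i * #S' := by
  obtain ⟨z, hz⟩ := exists_card_le_mul_card_fiber {w ∈ S | H.Adj a w}
    fun w (j : Fin i) => χ {v j, a, w}
  rw [Fintype.card_fun, Fintype.card_bool, Fintype.card_fin] at hz
  refine ⟨_, _, h.update ha ((filter_subset _ _).trans (filter_subset _ _))
    (fun w hw => (mem_filter.1 (mem_filter.1 hw).1).2)
    (z := fun j => if hj : j < i then z ⟨j, hj⟩ else false) ?_, hz⟩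
  intro w hw j hj
  rw [dif_pos hj, ← (mem_filter.1 hw).2]

theorem exists_isEndHomogeneous [Fintype V] [Nonempty V] {r s m : ℕ}
    (hdeg : ∀ S : Finset V, s ≤ #S → ∃ a ∈ S, #S ≤ 2 ^ r * #{w ∈ S | H.Adj a w})
    (hV : s * 2 ^ ((r + m) * m) ≤ Fintype.card V) :
    ∀ i ≤ m, ∃ v g S, IsEndHomogeneous H χ i v g S ∧
      Fintype.card V ≤ 2 ^ ((r + m) * i) * #S := by
  intro i
  induction i with
  | zero =>
    intro _
    exact ⟨fun _ => Classical.arbitrary V, fun _ _ => true, univ, isEndHomogeneous_zero,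
      by simp⟩
  | succ i ih =>
    intro hi
    obtain ⟨v, g, S, h, hS⟩ := ih (by omega)
    have hsS : s ≤ #S := by
      refine Nat.le_of_mul_le_mul_right ?_ (pow_pos two_pos ((r + m) * i))
      calc s * 2 ^ ((r + m) * i) ≤ s * 2 ^ ((r + m) * m) := by gcongr <;> omega
        _ ≤ 2 ^ ((r + m) * i) * #S := hV.trans hS
        _ = #S * 2 ^ ((r + m) * i) := mul_comm _ _
    obtain ⟨a, ha, hdeg_a⟩ := hdeg S hsS
    obtain ⟨g', S', h', hS'⟩ := h.exists_update ha
    refine ⟨_, g', S', h', ?_⟩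
    calc Fintype.card V ≤ 2 ^ ((r + m) * i) * #S := hS
      _ ≤ 2 ^ ((r + m) * i) * (2 ^ r * (2 ^ i * #S')) := by
          gcongr; exact hdeg_a.trans (by gcongr)
      _ = 2 ^ ((r + m) * i + (r + i)) * #S' := by ring
      _ ≤ 2 ^ ((r + m) * (i + 1)) * #S' := by gcongr <;> [omega; nlinarith]

end EndHomogeneous

section Assembly

variable {ι V : Type*} [LinearOrder ι] {H : SimpleGraph V} {T : Finset ι} {v : ι → V}

lemma injOn_of_adj (hadj : ∀ j ∈ T, ∀ k ∈ T, j < k → H.Adj (v j) (v k)) :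
    Set.InjOn v T := by
  intro j hj k hk hjk
  by_contra hne
  rcases lt_or_gt_of_ne hne with hlt | hlt
  · exact (hadj j hj k hk hlt).ne hjk
  · exact (hadj k hk j hj hlt).ne hjk.symm

variable [DecidableEq V]

lemma isNClique_image_of_adj (hadj : ∀ j ∈ T, ∀ k ∈ T, j < k → H.Adj (v j) (v k)) :
    H.IsNClique #T (T.image v) := by
  refine ⟨?_, card_image_of_injOn (injOn_of_adj hadj)⟩
  intro x hx y hy hxy
  obtain ⟨j, hj, rfl⟩ := mem_image.1 (mem_coe.1 hx)
  obtain ⟨k, hk, rfl⟩ := mem_image.1 (mem_coe.1 hy)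
  rcases lt_or_gt_of_ne (fun h => hxy (congrArg v h)) with hlt | hlt
  · exact hadj j hj k hk hlt
  · exact (hadj k hk j hj hlt).symm

lemma exists_lt_lt_of_subset_image (hv : Set.InjOn v T) {t : Finset V} (ht : t ⊆ T.image v)
    (h3 : #t = 3) :
    ∃ x ∈ T, ∃ y ∈ T, ∃ z ∈ T, x < y ∧ y < z ∧ t = {v x, v y, v z} := by
  obtain ⟨J, hJT, rfl⟩ := subset_image_iff.1 ht
  have hJ : #J = 3 := by rwa [card_image_of_injOn (hv.mono hJT)] at h3
  set f := J.orderEmbOfFin hJ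
  have hJeq : J = {f 0, f 1, f 2} := by
    ext w
    rw [← mem_coe, ← range_orderEmbOfFin J hJ, Set.mem_range]
    simp only [Fin.exists_fin_succ, Fin.exists_fin_zero, mem_insert, mem_singleton]
    tauto
  refine ⟨f 0, hJT (J.orderEmbOfFin_mem hJ 0), f 1, hJT (J.orderEmbOfFin_mem hJ 1),
    f 2, hJT (J.orderEmbOfFin_mem hJ 2), f.strictMono (by decide), f.strictMono (by decide), ?_⟩
  rw [hJeq]
  simp only [image_insert, image_singleton]

lemma color_eq_of_isMonochromatic {χ : Finset V → Bool} {g : ι → ι → Bool} {b : Bool}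
    (hadj : ∀ j ∈ T, ∀ k ∈ T, j < k → H.Adj (v j) (v k))
    (hcol : ∀ j ∈ T, ∀ k ∈ T, ∀ l ∈ T, j < k → k < l → χ {v j, v k, v l} = g j k)
    (hmono : IsMonochromatic g b T) {t : Finset V} (ht : t ⊆ T.image v) (h3 : H.IsNClique 3 t) :
    χ t = b := by
  obtain ⟨x, hx, y, hy, z, hz, hxy, hyz, rfl⟩ :=
    exists_lt_lt_of_subset_image (injOn_of_adj hadj) ht h3.card_eq
  exact (hcol x hx y hy z hz hxy hyz).trans (hmono x hx y hy hxy)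

end Assembly

lemma rpow_neg_one_div_eight_le {x : ℝ} (hx : 4 ^ 8 ≤ x) : x ^ (-(1 / 8 : ℝ)) ≤ 1 / 4 := by
  have h4 : (4 : ℝ) ≤ x ^ (1 / 8 : ℝ) := calc
    (4 : ℝ) = ((4 : ℝ) ^ 8) ^ (1 / 8 : ℝ) := by
      rw [← Real.rpow_natCast, ← Real.rpow_mul (by norm_num)]; norm_num
    _ ≤ x ^ (1 / 8 : ℝ) := by gcongr
  rw [Real.rpow_neg (by linarith), one_div 4]
  exact inv_anti₀ (by norm_num) h4

lemma three_add_centralBinom_mul_le (p : ℕ) :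
    (3 + p.centralBinom) * p.centralBinom ≤ 2 ^ (4 * p + 3) := by
  have hle := Nat.centralBinom_le_four_pow p
  have hpos := p.centralBinom_pos
  have h4 : 2 ^ (4 * p + 3) = 8 * (4 ^ p * 4 ^ p) := by
    rw [← mul_pow, pow_add, pow_mul]; norm_num; ring
  nlinarith

theorem PropertyP.arrowKnTri {V : Type*} [Fintype V] [DecidableEq V] [Nonempty V]
    {H : SimpleGraph V} (hP : PropertyP H)
    (hε : (Fintype.card V : ℝ) ^ (-(1 / 8 : ℝ)) ≤ 1 / 4) {s p : ℕ}
    (hs : Real.sqrt (Fintype.card V) ≤ s)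
    (hV : s * 2 ^ ((3 + p.centralBinom) * p.centralBinom) ≤ Fintype.card V) :
    ArrowKnTri H (p + 1) := by
  intro χ
  obtain ⟨v, g, _, h, -⟩ := exists_isEndHomogeneous (χ := χ) (r := 3) (fun S hS =>
    hP.exists_mem_card_le_eight_mul_degree hε (hs.trans (by exact_mod_cast hS))) hV _ le_rfl
  obtain ⟨T, hT, b, hTcard, hmono⟩ :=
    exists_isMonochromatic_of_centralBinom_le g (S := range p.centralBinom) (card_range _).ge
  have hTm : ∀ j ∈ T, j < p.centralBinom := fun j hj => mem_range.1 (hT hj)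
  have hadj : ∀ j ∈ T, ∀ k ∈ T, j < k → H.Adj (v j) (v k) := fun j _ k hk hjk =>
    h.adj j k hjk (hTm k hk)
  refine ⟨T.image v, b, hTcard ▸ isNClique_image_of_adj hadj, fun t ht h3 =>
    color_eq_of_isMonochromatic hadj ?_ hmono ht h3⟩
  exact fun j _ k _ l hl hjk hkl => h.color j k l hjk hkl (hTm l hl)

theorem stmt4 (n : ℕ) (hn : 1 ≤ n) (H : SimpleGraph (Fin (2 ^ 2 ^ (4 * n))))
    (hP : PropertyP H) : ArrowKnTri H n := by
  obtain ⟨p, rfl⟩ : ∃ p, n = p + 1 := ⟨n - 1, by omega⟩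
  set s := 2 ^ 2 ^ (4 * p + 3)
  have hV : Fintype.card (Fin (2 ^ 2 ^ (4 * (p + 1)))) = s * s := by
    rw [Fintype.card_fin, ← pow_add, ← two_mul, ← pow_succ']; ring_nf
  have hs : 2 ^ 8 ≤ s := Nat.pow_le_pow_right two_pos
    ((show 8 = 2 ^ 3 by rfl).trans_le (Nat.pow_le_pow_right two_pos (by omega)))
  refine hP.arrowKnTri (s := s) ?_ ?_ ?_
  · refine rpow_neg_one_div_eight_le ?_
    rw [hV, Nat.cast_mul]
    calc (4 : ℝ) ^ 8 = 2 ^ 8 * 2 ^ 8 := by norm_num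
      _ ≤ (s : ℝ) * s := by gcongr <;> exact_mod_cast hs
  · rw [hV, Nat.cast_mul, Real.sqrt_mul_self (Nat.cast_nonneg _)]
  · rw [hV]
    gcongr
    exact Nat.pow_le_pow_right two_pos (three_add_centralBinom_mul_le p)
end

section
/- For every integer n ≥ 2 and every m ≥ 2^(2^(4n)), the number of graphs on the labeled vertex set [m] satisfying H ⟶ (Kₙ)^Δ is at least (3/4)·2^(binom(m,2)). Equivalently, the random graph G(m,1/2) satisfies G(m,1/2) ⟶ (Kₙ)^Δ with probability at least 3/4. -/
/-!
Fix a set `A` of `2 ^ 2 ^ (4n)` vertices and `t = 4 · 2 ^ (4n)`. A union bound over the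
`t`-subsets of `A` shows that at most a quarter of all graphs have an independent `t`-set
inside `A`.

Every other graph `G` arrows `(Kₙ)^Δ`. Since `G` has no independent `t`-set in `A`, every
`B ⊆ A` contains a vertex `w` with at least `|B| / t - 1` neighbours in `B`. Appending such a
`w` to a clique `v₀, …, v_{k-1}` and keeping only those neighbours `x` of `w` whose colour
pattern `(χ {vᵢ, w, x})_{i < k}` is the most popular one, we build a clique `v₀, …, v_{s-1}`,
`s = 2 ^ (2n - 1)`, in which the colour of `{vᵢ, vⱼ, vₗ}` (`i < j < l`) depends only on
`(i, j)`. The bound `R(n, n) ≤ 2 ^ (2n - 1)` for this colouring of pairs then yields `n` of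
the `vᵢ` spanning a monochromatic `Kₙ`.
-/

open Finset

namespace Finset

variable {α : Type*} [LinearOrder α]

theorem exists_lt_lt_eq_of_card_eq_three {s : Finset α} (hs : #s = 3) :
    ∃ a b c, a < b ∧ b < c ∧ s = {a, b, c} := by
  let f := s.orderEmbOfFin hs
  refine ⟨f 0, f 1, f 2, by simp [f], by simp [f], coe_injective ?_⟩
  rw [← range_orderEmbOfFin s hs]
  ext x
  simp only [Set.mem_range, Fin.exists_fin_succ, Fin.exists_fin_zero, coe_insert, coe_singleton,
    Set.mem_insert_iff, Set.mem_singleton_iff, or_false, @eq_comm _ x]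
  rfl

theorem exists_leftHomogeneous_subset (c : α → α → Bool) {k : ℕ} {A : Finset α}
    (hA : 2 ^ k ≤ #A) :
    ∃ U ⊆ A, #U = k ∧ ∃ b : α → Bool, ∀ i ∈ U, ∀ j ∈ U, i < j → c i j = b i := by
  induction k generalizing A with
  | zero => exact ⟨∅, empty_subset _, rfl, fun _ => true, by simp⟩
  | succ k ih =>
    have hne : A.Nonempty := card_pos.1 ((Nat.two_pow_pos _).trans_le hA)
    set a := A.min' hne
    obtain ⟨col, -, hcol⟩ := exists_lt_card_fiber_of_mul_lt_card_of_maps_to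
      (f := c a) (s := A.erase a) (t := univ) (n := 2 ^ k - 1) (fun _ _ => mem_univ _) <| by
        rw [card_univ, Fintype.card_bool, card_erase_of_mem (min'_mem A hne)]
        have := Nat.two_pow_pos k
        rw [pow_succ] at hA
        omega
    obtain ⟨U, hUA, hU, b, hb⟩ := ih (A := {x ∈ A.erase a | c a x = col})
      (by have := Nat.two_pow_pos k; omega)
    have haU : a ∉ U := fun h => by simpa using hUA h
    have hsub : insert a U ⊆ A :=
      insert_subset (min'_mem A hne) (hUA.trans ((filter_subset _ _).trans (erase_subset _ _)))
    refine ⟨insert a U, hsub, by rw [card_insert_of_notMem haU, hU], Function.update b a col,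
      ?_⟩
    intro i hi j hj hij
    have hjU : j ∈ U := (mem_insert.1 hj).resolve_left
      fun hja => (min'_le A i (hsub hi)).not_gt (by rwa [hja] at hij)
    rcases mem_insert.1 hi with rfl | hi
    · simpa using (mem_filter.1 (hUA hjU)).2
    · rw [Function.update_of_ne (ne_of_mem_of_not_mem hi haU)]
      exact hb i hi j hjU hij

theorem exists_homogeneous_subset (c : α → α → Bool) {n : ℕ} (hn : 0 < n) (A : Finset α)
    (hA : 2 ^ (2 * n - 1) ≤ #A) :
    ∃ J ⊆ A, #J = n ∧ ∃ col : Bool, ∀ i ∈ J, ∀ j ∈ J, i < j → c i j = col := by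
  obtain ⟨U, hUA, hU, b, hb⟩ := exists_leftHomogeneous_subset c hA
  obtain ⟨col, -, hcol⟩ := exists_lt_card_fiber_of_mul_lt_card_of_maps_to
    (f := b) (s := U) (t := univ) (n := n - 1) (fun _ _ => mem_univ _)
    (by rw [card_univ, Fintype.card_bool]; omega)
  obtain ⟨J, hJ, hJn⟩ := exists_subset_card_eq (show n ≤ #{i ∈ U | b i = col} by omega)
  refine ⟨J, hJ.trans ((filter_subset _ _).trans hUA), hJn, col, fun i hi j hj hij => ?_⟩
  rw [hb i (filter_subset _ _ (hJ hi)) j (filter_subset _ _ (hJ hj)) hij]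
  exact (mem_filter.1 (hJ hi)).2

end Finset

theorem four_mul_two_pow_mul_le_two_pow_choose {a : ℕ} (ha : 0 < a) :
    4 * 2 ^ (a * (4 * a)) ≤ 2 ^ (4 * a).choose 2 := by
  have hchoose : (4 * a).choose 2 = 2 * a * (4 * a - 1) := by
    rw [Nat.choose_two_right, show 4 * a * (4 * a - 1) = 2 * (2 * a * (4 * a - 1)) by ring,
      Nat.mul_div_cancel_left _ two_pos]
  rw [hchoose, show 4 * 2 ^ (a * (4 * a)) = 2 ^ (2 + a * (4 * a)) by ring]
  apply Nat.pow_le_pow_right two_pos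
  obtain ⟨b, rfl⟩ := Nat.exists_eq_add_of_le' ha
  rw [show 4 * (b + 1) - 1 = 4 * b + 3 by omega]
  nlinarith

namespace SimpleGraph

variable {V : Type*}

open scoped Classical in
noncomputable def equivEdgeSetTopToBool :
    SimpleGraph V ≃ ((⊤ : SimpleGraph V).edgeSet → Bool) where
  toFun G e := decide (e.1 ∈ G.edgeSet)
  invFun C := fromEdgeSet {e | ∃ h, C ⟨e, h⟩}
  left_inv G := by
    ext x y
    simp only [fromEdgeSet_adj, Set.mem_ofPred_eq, decide_eq_true_eq, mem_edgeSet]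
    exact ⟨fun ⟨⟨_, h⟩, _⟩ => h, fun h => ⟨⟨h.ne, h⟩, h.ne⟩⟩
  right_inv C := by
    funext ⟨e, he⟩
    induction e with
    | _ x y =>
      have hxy : x ≠ y := he
      cases h : C ⟨s(x, y), he⟩ <;> simp [h, hxy]

section Counting

variable [Fintype V] [DecidableEq V]

theorem card_eq_two_pow_choose_two :
    Fintype.card (SimpleGraph V) = 2 ^ (Fintype.card V).choose 2 := by
  rw [Fintype.card_congr equivEdgeSetTopToBool, Fintype.card_fun, Fintype.card_bool,
    ← edgeFinset_card, card_edgeFinset_top_eq_card_choose_two]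

open scoped Classical in
theorem card_isIndepSet_mul_le (I : Finset V) :
    #{G : SimpleGraph V | G.IsIndepSet I} * 2 ^ (#I).choose 2 ≤
      2 ^ (Fintype.card V).choose 2 := by
  let glue (p : {G : SimpleGraph V // G.IsIndepSet I} × SimpleGraph I) : SimpleGraph V :=
    p.1.1 ⊔ p.2.map (Function.Embedding.subtype _)
  have outside (p) (x y : V) : p.1.1.Adj x y ↔ (glue p).Adj x y ∧ ¬ (x ∈ I ∧ y ∈ I) := by
    have hI : p.1.1.IsIndepSet I := p.1.2
    simp only [glue, sup_adj, map_adj, Function.Embedding.subtype_apply]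
    refine ⟨fun h => ⟨.inl h, fun hxy => hI hxy.1 hxy.2 h.ne h⟩, ?_⟩
    rintro ⟨h | ⟨x, y, -, rfl, rfl⟩, hxy⟩
    · exact h
    · exact absurd ⟨x.2, y.2⟩ hxy
  have inside (p) (x y : I) : p.2.Adj x y ↔ (glue p).Adj x y := by
    have hI : p.1.1.IsIndepSet I := p.1.2
    simp only [glue, sup_adj]
    rw [show (x : V) = Function.Embedding.subtype _ x from rfl,
      show (y : V) = Function.Embedding.subtype _ y from rfl, map_adj_apply]
    exact ⟨.inr, fun h => h.resolve_left fun h => hI x.2 y.2 h.ne h⟩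
  have hglue : Function.Injective glue := fun p q h => Prod.ext
    (Subtype.ext <| by ext x y; rw [outside, outside, h])
    (by ext x y; rw [inside, inside, h])
  have := Fintype.card_le_of_injective glue hglue
  rwa [Fintype.card_prod, card_eq_two_pow_choose_two, card_eq_two_pow_choose_two,
    Fintype.card_subtype, Fintype.card_coe] at this

open scoped Classical in
theorem card_not_indepSetFreeOn_mul_le (A : Finset V) (t : ℕ) :
    #{G : SimpleGraph V | ¬ G.IndepSetFreeOn A t} * 2 ^ t.choose 2 ≤
      (#A).choose t * 2 ^ (Fintype.card V).choose 2 := by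
  have hcover : ({G : SimpleGraph V | ¬ G.IndepSetFreeOn A t} : Finset _) ⊆
      (A.powersetCard t).biUnion fun I => {G : SimpleGraph V | G.IsIndepSet I} := by
    intro G hG
    simp only [IndepSetFreeOn, mem_filter, mem_univ, true_and, not_forall, not_not] at hG
    obtain ⟨I, hIA, hI⟩ := hG
    exact mem_biUnion.2 ⟨I, mem_powersetCard.2 ⟨coe_subset.1 hIA, hI.card_eq⟩,
      by simpa using hI.isIndepSet⟩
  calc #{G : SimpleGraph V | ¬ G.IndepSetFreeOn A t} * 2 ^ t.choose 2
      ≤ ∑ I ∈ A.powersetCard t, #{G : SimpleGraph V | G.IsIndepSet I} * 2 ^ t.choose 2 := by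
        rw [← sum_mul]
        gcongr
        exact (card_le_card hcover).trans card_biUnion_le
    _ ≤ ∑ I ∈ A.powersetCard t, 2 ^ (Fintype.card V).choose 2 := by
        refine sum_le_sum fun I hI => ?_
        rw [← (mem_powersetCard.1 hI).2]
        exact card_isIndepSet_mul_le I
    _ = (#A).choose t * 2 ^ (Fintype.card V).choose 2 := by
        rw [sum_const, card_powersetCard, smul_eq_mul]

open scoped Classical in
theorem four_mul_card_not_indepSetFreeOn_le {A : Finset V} {a : ℕ} (ha : 0 < a)
    (hA : #A = 2 ^ a) :
    4 * #{G : SimpleGraph V | ¬ G.IndepSetFreeOn A (4 * a)} ≤ 2 ^ (Fintype.card V).choose 2 := by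
  have hcount := card_not_indepSetFreeOn_mul_le A (4 * a)
  have hchoose : 4 * (#A).choose (4 * a) ≤ 2 ^ (4 * a).choose 2 := by
    rw [hA]
    exact (Nat.mul_le_mul_left 4 ((Nat.choose_le_pow _ _).trans_eq (by rw [← pow_mul]))).trans
      (four_mul_two_pow_mul_le_two_pow_choose ha)
  refine Nat.le_of_mul_le_mul_right (c := 2 ^ (4 * a).choose 2) ?_ (by positivity)
  nlinarith [Nat.mul_le_mul_right (2 ^ (Fintype.card V).choose 2) hchoose]

end Counting

theorem IndepSetFreeOn.pos {G : SimpleGraph V} {s : Set V} {t : ℕ} (h : G.IndepSetFreeOn s t) :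
    0 < t :=
  Nat.pos_of_ne_zero fun ht => h (t := ∅) (by simp) ⟨by simp, by simp [ht]⟩

section StepUp

variable [DecidableEq V] {G : SimpleGraph V}

theorem IndepSetFreeOn.exists_card_le_mul_card_adj [DecidableRel G.Adj] {A : Finset V} {t : ℕ}
    (hA : G.IndepSetFreeOn A t) (hne : A.Nonempty) :
    ∃ v ∈ A, #A ≤ t * (#{x ∈ A | G.Adj v x} + 1) := by
  obtain ⟨I, hI, hmax⟩ := exists_max_image
    (A.powerset.filter fun I : Finset V => G.IsIndepSet (I : Set V)) card ⟨∅, by simp⟩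
  rw [mem_filter, mem_powerset] at hI
  obtain ⟨hIA, hIindep⟩ := hI
  have hIt : #I < t := by
    by_contra! h
    obtain ⟨J, hJI, hJ⟩ := exists_subset_card_eq h
    exact hA (coe_subset.2 (hJI.trans hIA)) ⟨hIindep.mono (coe_subset.2 hJI), hJ⟩
  -- a maximal independent subset of `A` dominates `A`
  have hdom : A ⊆ I.biUnion fun w => insert w {x ∈ A | G.Adj w x} := by
    intro x hx
    by_contra hxI
    simp only [mem_biUnion, mem_insert, mem_filter, not_exists, not_and, not_or] at hxI
    have hins :
        insert x I ∈ A.powerset.filter fun I : Finset V => G.IsIndepSet (I : Set V) := by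
      rw [mem_filter, mem_powerset, coe_insert]
      refine ⟨insert_subset hx hIA, hIindep.insert fun w hw _ => ?_⟩
      have := (hxI w hw).2 hx
      exact ⟨fun h => this h.symm, this⟩
    have := hmax _ hins
    rw [card_insert_of_notMem fun h => (hxI x h).1 rfl] at this
    omega
  obtain ⟨v, hvI, hv⟩ := exists_max_image I (fun w => #{x ∈ A | G.Adj w x}) <| by
    obtain ⟨x, hx⟩ := hne
    obtain ⟨w, hw, -⟩ := mem_biUnion.1 (hdom hx)
    exact ⟨w, hw⟩
  refine ⟨v, hIA hvI, ?_⟩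
  calc #A ≤ ∑ w ∈ I, #(insert w {x ∈ A | G.Adj w x}) :=
        (card_le_card hdom).trans card_biUnion_le
    _ ≤ ∑ w ∈ I, (#{x ∈ A | G.Adj v x} + 1) :=
        sum_le_sum fun w hw => (card_insert_le _ _).trans (Nat.add_le_add_right (hv w hw) 1)
    _ ≤ t * (#{x ∈ A | G.Adj v x} + 1) := by
        rw [sum_const, smul_eq_mul]
        gcongr

variable (G) (χ : Finset V → Bool)

/-- `col` is indexed by the larger index first, so that appending `v k` to the sequence only
sets the row `col k`. -/
def CanFollow (v : ℕ → V) (col : ℕ → ℕ → Bool) (k : ℕ) (x : V) : Prop :=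
  ∀ j < k, G.Adj (v j) x ∧ ∀ i < j, χ {v i, v j, x} = col j i

variable {G χ}

theorem CanFollow.update {v : ℕ → V} {col : ℕ → ℕ → Bool} {k l : ℕ} {x w : V} {p : ℕ → Bool}
    (h : G.CanFollow χ v col l x) (hl : l ≤ k) :
    G.CanFollow χ (Function.update v k w) (Function.update col k p) l x := fun j hj => by
  have hne : ∀ i < l, i ≠ k := fun i hi => (hi.trans_le hl).ne
  refine ⟨by rw [Function.update_of_ne (hne j hj)]; exact (h j hj).1, fun i hij => ?_⟩
  rw [Function.update_of_ne (hne i (hij.trans hj)), Function.update_of_ne (hne j hj),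
    Function.update_of_ne (hne j hj)]
  exact (h j hj).2 i hij

theorem IndepSetFreeOn.exists_canFollow_succ [DecidableRel G.Adj] {B : Finset V} {t M k : ℕ}
    {v : ℕ → V} {col : ℕ → ℕ → Bool} (hB : G.IndepSetFreeOn B t)
    (hv : ∀ x ∈ B, G.CanFollow χ v col k x) (hcard : t * (2 ^ k * M + 1) ≤ #B) :
    ∃ w ∈ B, ∃ p : ℕ → Bool, ∃ F ⊆ B, M ≤ #F ∧
      ∀ x ∈ F, G.CanFollow χ (Function.update v k w) (Function.update col k p) (k + 1) x := by
  have ht := hB.pos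
  obtain ⟨w, hwB, hw⟩ := hB.exists_card_le_mul_card_adj <| card_pos.1 <|
    ht.trans_le <| (Nat.le_mul_of_pos_right t (Nat.succ_pos _)).trans hcard
  have hD : 2 ^ k * M ≤ #{x ∈ B | G.Adj w x} := by
    have := Nat.le_of_mul_le_mul_left (hcard.trans hw) ht
    omega
  obtain ⟨q, -, hq⟩ := exists_le_card_fiber_of_mul_le_card_of_maps_to
    (f := fun x (i : Fin k) => χ {v i, w, x}) (t := univ) (fun _ _ => mem_univ _) univ_nonempty
    (by simpa using hD)
  refine ⟨w, hwB, fun i => if h : i < k then q ⟨i, h⟩ else false, _,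
    (filter_subset _ _).trans (filter_subset _ _), hq, fun x hx j hj => ?_⟩
  obtain ⟨⟨hxB, hwx⟩, hxq⟩ := by simpa only [mem_filter] using hx
  rcases Nat.lt_succ_iff_lt_or_eq.1 hj with hj | rfl
  · exact (hv x hxB).update le_rfl j hj
  · refine ⟨by simpa using hwx, fun i hi => ?_⟩
    simp only [Function.update_self, Function.update_of_ne hi.ne, dif_pos hi, ← hxq]

theorem IndepSetFreeOn.exists_canFollow_seq_extend [DecidableRel G.Adj] {t s j k : ℕ}
    {v : ℕ → V} {col : ℕ → ℕ → Bool} {B : Finset V} (hB : G.IndepSetFreeOn B t)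
    (hks : k + j ≤ s) (hv : ∀ l < k, G.CanFollow χ v col l (v l))
    (hvB : ∀ x ∈ B, G.CanFollow χ v col k x) (hcard : (2 * t * 2 ^ s) ^ j ≤ #B) :
    ∃ v' col', ∀ l < k + j, G.CanFollow χ v' col' l (v' l) := by
  induction j generalizing k v col B with
  | zero => exact ⟨v, col, hv⟩
  | succ j ih =>
    set X := (2 * t * 2 ^ s) ^ j
    obtain ⟨w, hwB, p, F, hFB, hF, hFv⟩ := hB.exists_canFollow_succ (M := X) hvB <| by
      have h1 : t * 2 ^ k * X ≤ t * 2 ^ s * X := by gcongr <;> omega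
      have hX : 0 < X := pow_pos (by have := hB.pos; positivity) j
      have h2 : t ≤ t * 2 ^ s * X := by
        rw [mul_assoc]
        exact Nat.le_mul_of_pos_right t (Nat.mul_pos (Nat.two_pow_pos s) hX)
      calc t * (2 ^ k * X + 1) = t * 2 ^ k * X + t := by ring
        _ ≤ t * 2 ^ s * X + t * 2 ^ s * X := add_le_add h1 h2
        _ = (2 * t * 2 ^ s) ^ (j + 1) := by ring
        _ ≤ #B := hcard
    have hv' : ∀ l < k + 1, G.CanFollow χ (Function.update v k w) (Function.update col k p) l
        (Function.update v k w l) := by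
      intro l hl
      rcases Nat.lt_succ_iff_lt_or_eq.1 hl with hl | rfl
      · rw [Function.update_of_ne hl.ne]
        exact (hv l hl).update hl.le
      · rw [Function.update_self]
        exact (hvB w hwB).update le_rfl
    obtain ⟨v', col', h⟩ :=
      ih (fun _ h => hB (h.trans (coe_subset.2 hFB))) (by omega) hv' hFv hF
    exact ⟨v', col', fun l hl => h l (by omega)⟩

variable (χ) in
theorem IndepSetFreeOn.exists_canFollow_seq [DecidableRel G.Adj] {A : Finset V} {t s : ℕ}
    (hA : G.IndepSetFreeOn A t) (hcard : (2 * t * 2 ^ s) ^ s ≤ #A) :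
    ∃ v col, ∀ l < s, G.CanFollow χ v col l (v l) := by
  obtain ⟨x, -⟩ : A.Nonempty :=
    card_pos.1 <| (pow_pos (by have := hA.pos; positivity) s).trans_le hcard
  simpa using hA.exists_canFollow_seq_extend (s := s) (j := s) (k := 0) (v := fun _ => x)
    (col := fun _ _ => false) (by simp) (by simp) (fun _ _ _ h => absurd h (Nat.not_lt_zero _))
    hcard

theorem exists_monochromatic_of_canFollow {n : ℕ} (hn : 0 < n) {v : ℕ → V}
    {col : ℕ → ℕ → Bool} (hv : ∀ l < 2 ^ (2 * n - 1), G.CanFollow χ v col l (v l)) :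
    ∃ (K : Finset V) (c : Bool), G.IsNClique n K ∧ ∀ T ⊆ K, G.IsNClique 3 T → χ T = c := by
  obtain ⟨J, hJ, hJn, c, hc⟩ := exists_homogeneous_subset (fun i j => col j i) hn
    (range (2 ^ (2 * n - 1))) (by simp)
  have hadj : ∀ i ∈ J, ∀ j ∈ J, i < j → G.Adj (v i) (v j) := fun i _ j hj hij =>
    ((hv j (mem_range.1 (hJ hj))) i hij).1
  have hinj : Set.InjOn v J := by
    intro i hi j hj hij
    by_contra hne
    rcases Ne.lt_or_gt hne with h | h
    · exact (hadj i hi j hj h).ne hij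
    · exact (hadj j hj i hi h).ne hij.symm
  refine ⟨J.image v, c, ⟨?_, by rw [card_image_of_injOn hinj, hJn]⟩, ?_⟩
  · rw [coe_image, isClique_iff, hinj.pairwise_image]
    intro i hi j hj hij
    rcases Ne.lt_or_gt hij with h | h
    · exact hadj i hi j hj h
    · exact (hadj j hj i hi h).symm
  · intro T hT hT3
    obtain ⟨S, hSJ, rfl⟩ := subset_image_iff.1 hT
    have hS : #S = 3 := by rw [← card_image_of_injOn (hinj.mono hSJ), hT3.card_eq]
    obtain ⟨a, b, d, hab, hbd, rfl⟩ := exists_lt_lt_eq_of_card_eq_three hS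
    have hd := hv d (mem_range.1 (hJ (hSJ (by simp))))
    simp only [image_insert, image_singleton]
    rw [(hd b hbd).2 a hab]
    exact hc a (hSJ (by simp)) b (hSJ (by simp)) hab

end StepUp

theorem arrowKnTri_of_indepSetFreeOn {G : SimpleGraph V} {n t : ℕ} (hn : 0 < n)
    {A : Finset V} (hA : G.IndepSetFreeOn A t)
    (hcard : (2 * t * 2 ^ 2 ^ (2 * n - 1)) ^ 2 ^ (2 * n - 1) ≤ #A) : ArrowKnTri G n := by
  classical
  intro χ
  obtain ⟨v, col, hv⟩ := hA.exists_canFollow_seq χ hcard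
  exact exists_monochromatic_of_canFollow hn hv

end SimpleGraph

theorem two_mul_four_mul_pow_le {n : ℕ} (hn : 2 ≤ n) :
    (2 * (4 * 2 ^ (4 * n)) * 2 ^ 2 ^ (2 * n - 1)) ^ 2 ^ (2 * n - 1) ≤ 2 ^ 2 ^ (4 * n) := by
  set s := 2 ^ (2 * n - 1)
  have hs : 2 ^ (4 * n) = 4 * s ^ 2 := by
    rw [← pow_mul, show 4 * n = 2 + (2 * n - 1) * 2 by omega, pow_add, pow_mul]
    rfl
  have h2n : 2 * n ≤ s := by
    have := Nat.lt_two_pow_self (n := 2 * n - 1)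
    omega
  calc (2 * (4 * 2 ^ (4 * n)) * 2 ^ s) ^ s = 2 ^ ((4 * n + 3 + s) * s) := by
        rw [show 2 * (4 * 2 ^ (4 * n)) * 2 ^ s = 2 ^ (4 * n + 3 + s) by ring, ← pow_mul]
    _ ≤ 2 ^ 2 ^ (4 * n) := by
        apply Nat.pow_le_pow_right two_pos
        rw [hs]
        nlinarith

theorem stmt5 (n m : ℕ) (hn : 2 ≤ n) (hm : 2 ^ 2 ^ (4 * n) ≤ m) :
    (3 / 4 : ℝ) * 2 ^ m.choose 2 ≤ Nat.card {G : SimpleGraph (Fin m) // ArrowKnTri G n} := by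
  classical
  obtain ⟨A, -, hA⟩ := exists_subset_card_eq (s := (univ : Finset (Fin m))) (by simpa using hm)
  have hbad := SimpleGraph.four_mul_card_not_indepSetFreeOn_le (V := Fin m) (by positivity) hA
  have htotal := card_filter_add_card_filter_not (s := univ)
    fun G : SimpleGraph (Fin m) => G.IndepSetFreeOn A (4 * 2 ^ (4 * n))
  rw [Fintype.card_fin] at hbad
  rw [card_univ, SimpleGraph.card_eq_two_pow_choose_two, Fintype.card_fin] at htotal
  have hgood : #{G : SimpleGraph (Fin m) | G.IndepSetFreeOn A (4 * 2 ^ (4 * n))} ≤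
      Nat.card {G : SimpleGraph (Fin m) // ArrowKnTri G n} := by
    rw [Nat.card_eq_fintype_card, Fintype.card_subtype]
    exact card_le_card <| monotone_filter_right _ fun G _ hG =>
      SimpleGraph.arrowKnTri_of_indepSetFreeOn (by omega) hG (hA ▸ two_mul_four_mul_pow_le hn)
  have key : 3 * 2 ^ m.choose 2 ≤ 4 * Nat.card {G : SimpleGraph (Fin m) // ArrowKnTri G n} := by
    omega
  have := (Nat.cast_le (α := ℝ)).2 key
  push_cast at this
  linarith
end

section
/- Let n ≥ 3, let 0 < ε < 1 and 0 < d ≤ 1, and let H be an n-partite n-uniform hypergraph with pairwise disjoint vertex classes U₁,…,Uₙ such that (U₁,…,Uₙ) is (ε,d)-dense with respect to H. Let BT be the n-partite 3-uniform hypergraph on U₁ ∪ … ∪ Uₙ whose edges are all triples {v₁,v₂,v₃} with the vᵢ in three distinct classes that are contained in some edge of H. Then for every 1 ≤ i < j < k ≤ n, the triple (Uᵢ,Uⱼ,U_k) is (ε,d)-dense with respect to BT. -/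
open Finset
open scoped Classical

/-- `e_H(W₁,…,W_r)`: the number of edges of `H` meeting every one of the sets `W i`. -/
noncomputable def crossCount {V : Type*} {r : ℕ} (H : Finset (Finset V))
    (W : Fin r → Finset V) : ℕ :=
  (H.filter fun e => ∀ i, (e ∩ W i).Nonempty).card

/-- `d_H(W₁,…,W_r) = e_H(W₁,…,W_r)/(|W₁|⋯|W_r|)`. -/
noncomputable def crossDensity {V : Type*} {r : ℕ} (H : Finset (Finset V))
    (W : Fin r → Finset V) : ℝ :=
  (crossCount H W : ℝ) / ∏ i, ((W i).card : ℝ)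

/-- The tuple `(Vs 1, …, Vs r)` is `(ε,d)`-dense with respect to `H`. -/
def IsDenseTuple {V : Type*} {r : ℕ} (H : Finset (Finset V)) (ε d : ℝ)
    (Vs : Fin r → Finset V) : Prop :=
  ∀ W : Fin r → Finset V, (∀ i, W i ⊆ Vs i) →
    (∀ i, ε * ((Vs i).card : ℝ) ≤ ((W i).card : ℝ)) → d ≤ crossDensity H W

/-- `BT H`: the 3-uniform hypergraph whose edges are the triples contained in some
edge of `H` (for an `n`-partite `H` these triples lie in three distinct classes). -/
noncomputable def BT {V : Type*} [DecidableEq V] (H : Finset (Finset V)) :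
    Finset (Finset V) :=
  H.biUnion fun e => e.powersetCard 3

/-- `crossCount` rewritten with the ambient `DecidableEq` instance. -/
lemma crossCount_eq' {V : Type*} [DecidableEq V] {r : ℕ} (H : Finset (Finset V))
    (W : Fin r → Finset V) :
    crossCount H W = (H.filter fun e => ∀ i, (e ∩ W i).Nonempty).card := by
  unfold crossCount
  have h : ∀ (e w : Finset V),
      (@Inter.inter (Finset V) (@Finset.instInter V (fun a b => Classical.propDecidable (a = b))) e w)
        = e ∩ w := fun e w =>
    congrArg (fun (i : DecidableEq V) => @Inter.inter (Finset V) (@Finset.instInter V i) e w)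
      (Subsingleton.elim _ _)
  simp only [h, Finset.filter_congr_decidable]

theorem stmt12 {V : Type*} [Fintype V] [DecidableEq V] (n : ℕ) (hn : 3 ≤ n) (ε d : ℝ)
    (hε0 : 0 < ε) (hε1 : ε < 1) (hd0 : 0 < d) (hd1 : d ≤ 1)
    (U : Fin n → Finset V) (hdisj : ∀ i j, i ≠ j → Disjoint (U i) (U j))
    (H : Finset (Finset V))
    (hH : ∀ e ∈ H, e.card = n ∧ ∀ i, (e ∩ U i).card = 1)
    (hdense : IsDenseTuple H ε d U) :
    ∀ i j k : Fin n, i < j → j < k → IsDenseTuple (BT H) ε d ![U i, U j, U k] := by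
  intro i j k hijlt hjklt
  have hij : i ≠ j := ne_of_lt hijlt
  have hjk : j ≠ k := ne_of_lt hjklt
  have hik : i ≠ k := ne_of_lt (hijlt.trans hjklt)
  intro W hWsub hWlb
  have hW0 : W 0 ⊆ U i := by simpa using hWsub 0
  have hW1 : W 1 ⊆ U j := by simpa using hWsub 1
  have hW2 : W 2 ⊆ U k := by simpa using hWsub 2
  have hl0 : ε * ((U i).card : ℝ) ≤ ((W 0).card : ℝ) := by simpa using hWlb 0
  have hl1 : ε * ((U j).card : ℝ) ≤ ((W 1).card : ℝ) := by simpa using hWlb 1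
  have hl2 : ε * ((U k).card : ℝ) ≤ ((W 2).card : ℝ) := by simpa using hWlb 2
  set W' : Fin n → Finset V := fun l =>
    if l = i then W 0 else if l = j then W 1 else if l = k then W 2 else U l with hW'def
  have hW'i : W' i = W 0 := by simp [hW'def]
  have hW'j : W' j = W 1 := by simp [hW'def, hij.symm]
  have hW'k : W' k = W 2 := by simp [hW'def, hik.symm, hjk.symm]
  have hW'other : ∀ l, l ≠ i → l ≠ j → l ≠ k → W' l = U l := by
    intro l h1 h2 h3; simp [hW'def, h1, h2, h3]
  have hsub' : ∀ l, W' l ⊆ U l := by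
    intro l
    by_cases h1 : l = i
    · subst h1; rw [hW'i]; exact hW0
    by_cases h2 : l = j
    · subst h2; rw [hW'j]; exact hW1
    by_cases h3 : l = k
    · subst h3; rw [hW'k]; exact hW2
    rw [hW'other l h1 h2 h3]
  have hlb' : ∀ l, ε * ((U l).card : ℝ) ≤ ((W' l).card : ℝ) := by
    intro l
    by_cases h1 : l = i
    · subst h1; rw [hW'i]; exact hl0
    by_cases h2 : l = j
    · subst h2; rw [hW'j]; exact hl1
    by_cases h3 : l = k
    · subst h3; rw [hW'k]; exact hl2
    rw [hW'other l h1 h2 h3]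
    nlinarith [Nat.cast_nonneg (α := ℝ) (U l).card]
  have hd' : d ≤ crossDensity H W' := hdense W' hsub' hlb'
  set S : Finset (Fin n) := {i, j, k} with hSdef
  have hmemS : ∀ l, l ∈ S ↔ (l = i ∨ l = j ∨ l = k) := by
    intro l; simp [hSdef]
  have hone : ∀ e ∈ H, ∀ l, (e ∩ U l).card = 1 := fun e he => (hH e he).2
  have hstep : ∀ e ∈ H, ∀ (l : Fin n) (X : Finset V), X ⊆ U l →
      (e ∩ X).Nonempty → e ∩ X = e ∩ U l := by
    intro e he l X hXU hne
    refine Finset.eq_of_subset_of_card_le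
      (Finset.inter_subset_inter (Finset.Subset.refl e) hXU) ?_
    rw [hone e he l]
    exact Nat.one_le_iff_ne_zero.mpr (Finset.card_ne_zero_of_mem hne.choose_spec)
  have hdecomp : ∀ e ∈ H, e = Finset.univ.biUnion (fun l => e ∩ U l) := by
    intro e he
    refine (Finset.eq_of_subset_of_card_le
      (Finset.biUnion_subset.mpr fun l _ => Finset.inter_subset_left) ?_).symm
    rw [Finset.card_biUnion]
    · rw [(hH e he).1]
      calc n = ∑ _l : Fin n, 1 := by simp
        _ ≤ ∑ l : Fin n, (e ∩ U l).card :=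
            Finset.sum_le_sum fun l _ => le_of_eq (hone e he l).symm
    · intro x _ y _ hxy
      exact (hdisj x y hxy).mono Finset.inter_subset_right Finset.inter_subset_right
  set f : Finset V → Finset V := fun e => (e ∩ U i ∪ e ∩ U j) ∪ e ∩ U k with hfdef
  have hsubi : ∀ e : Finset V, e ∩ U i ⊆ f e := by
    intro e; simp only [hfdef]
    exact Finset.Subset.trans Finset.subset_union_left Finset.subset_union_left
  have hsubj : ∀ e : Finset V, e ∩ U j ⊆ f e := by
    intro e; simp only [hfdef]
    exact Finset.Subset.trans Finset.subset_union_right Finset.subset_union_left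
  have hsubk : ∀ e : Finset V, e ∩ U k ⊆ f e := by
    intro e; simp only [hfdef]
    exact Finset.subset_union_right
  set s : Finset (Finset V) := H.filter (fun e => ∀ l, (e ∩ W' l).Nonempty) with hsdef
  have hsH : ∀ e ∈ s, e ∈ H := fun e he => (Finset.mem_filter.mp he).1
  have hsne : ∀ e ∈ s, ∀ l, (e ∩ W' l).Nonempty :=
    fun e he => (Finset.mem_filter.mp he).2
  have hfe_sub : ∀ e, f e ⊆ e := by
    intro e; simp only [hfdef]
    exact Finset.union_subset (Finset.union_subset Finset.inter_subset_left
      Finset.inter_subset_left) Finset.inter_subset_left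
  have hfe_card : ∀ e ∈ H, (f e).card = 3 := by
    intro e he
    have d01 : Disjoint (e ∩ U i) (e ∩ U j) :=
      (hdisj i j hij).mono Finset.inter_subset_right Finset.inter_subset_right
    have d2 : Disjoint (e ∩ U i ∪ e ∩ U j) (e ∩ U k) := by
      rw [Finset.disjoint_union_left]
      exact ⟨(hdisj i k hik).mono Finset.inter_subset_right Finset.inter_subset_right,
        (hdisj j k hjk).mono Finset.inter_subset_right Finset.inter_subset_right⟩
    simp only [hfdef]
    rw [Finset.card_union_of_disjoint d2, Finset.card_union_of_disjoint d01,
      hone e he i, hone e he j, hone e he k]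
  have hfe_BT : ∀ e ∈ H, f e ∈ BT H := by
    intro e he
    exact Finset.mem_biUnion.mpr ⟨e, he,
      Finset.mem_powersetCard.mpr ⟨hfe_sub e, hfe_card e he⟩⟩
  have hint0 : ∀ e ∈ s, e ∩ W 0 = e ∩ U i := by
    intro e he
    exact hstep e (hsH e he) i (W 0) hW0 (by have := hsne e he i; rwa [hW'i] at this)
  have hint1 : ∀ e ∈ s, e ∩ W 1 = e ∩ U j := by
    intro e he
    exact hstep e (hsH e he) j (W 1) hW1 (by have := hsne e he j; rwa [hW'j] at this)
  have hint2 : ∀ e ∈ s, e ∩ W 2 = e ∩ U k := by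
    intro e he
    exact hstep e (hsH e he) k (W 2) hW2 (by have := hsne e he k; rwa [hW'k] at this)
  have hfeW : ∀ e ∈ s, ∀ m : Fin 3, ((f e) ∩ W m).Nonempty := by
    intro e he m
    have key : ∀ (l : Fin n) (m' : Fin 3), e ∩ W m' = e ∩ U l → e ∩ U l ⊆ f e →
        ((f e) ∩ W m').Nonempty := by
      intro l m' heq hsubf
      have hne : (e ∩ U l).Nonempty :=
        Finset.card_pos.mp (by rw [hone e (hsH e he) l]; norm_num)
      obtain ⟨v, hv⟩ := hne
      have hvW : v ∈ W m' := by
        have : v ∈ e ∩ W m' := heq ▸ hv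
        exact (Finset.mem_inter.mp this).2
      exact ⟨v, Finset.mem_inter.mpr ⟨hsubf hv, hvW⟩⟩
    fin_cases m
    · exact key i 0 (hint0 e he) (hsubi e)
    · exact key j 1 (hint1 e he) (hsubj e)
    · exact key k 2 (hint2 e he) (hsubk e)
  have himage_sub : s.image f ⊆ (BT H).filter (fun t => ∀ m : Fin 3, (t ∩ W m).Nonempty) := by
    intro t ht
    obtain ⟨e, he, rfl⟩ := Finset.mem_image.mp ht
    exact Finset.mem_filter.mpr ⟨hfe_BT e (hsH e he), hfeW e he⟩
  have hQfib : ∀ t ∈ s.image f,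
      (s.filter fun e => f e = t).card ≤ ∏ l ∈ Sᶜ, (U l).card := by
    intro t _
    set F : Fin n → Finset (Finset V) := fun l =>
      if l ∈ S then ({t ∩ U l} : Finset (Finset V)) else (U l).image (fun v => ({v} : Finset V))
      with hFdef
    have hpicard : ((Finset.univ : Finset (Fin n)).pi (fun l => F l)).card
        = ∏ l ∈ Sᶜ, (U l).card := by
      rw [Finset.card_pi]
      rw [← Finset.prod_mul_prod_compl S (fun l => (F l).card)]
      have h1 : ∏ l ∈ S, (F l).card = 1 := by
        apply Finset.prod_eq_one
        intro l hl
        simp [hFdef, hl]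
      have h2 : ∏ l ∈ Sᶜ, (F l).card = ∏ l ∈ Sᶜ, (U l).card := by
        apply Finset.prod_congr rfl
        intro l hl
        have hlS : l ∉ S := Finset.mem_compl.mp hl
        simp only [hFdef, hlS, if_false]
        exact Finset.card_image_of_injective _ Finset.singleton_injective
      rw [h1, h2, one_mul]
    rw [← hpicard]
    apply Finset.card_le_card_of_injOn (fun e => fun l _ => e ∩ U l)
    · intro e he
      have heS := Finset.mem_filter.mp he
      have heH : e ∈ H := hsH e heS.1
      have hfet : f e = t := heS.2
      refine Finset.mem_pi.mpr ?_
      intro l _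
      by_cases hlS : l ∈ S
      · simp only [hFdef, hlS, if_true, Finset.mem_singleton]
        have hsub1 : t ∩ U l ⊆ e ∩ U l := by
          rw [← hfet]
          exact Finset.inter_subset_inter (hfe_sub e) (Finset.Subset.refl _)
        have hsub2 : e ∩ U l ⊆ t ∩ U l := by
          rw [← hfet]
          rcases (hmemS l).mp hlS with rfl | rfl | rfl
          · exact Finset.subset_inter (hsubi e) Finset.inter_subset_right
          · exact Finset.subset_inter (hsubj e) Finset.inter_subset_right
          · exact Finset.subset_inter (hsubk e) Finset.inter_subset_right
        exact Finset.Subset.antisymm hsub2 hsub1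
      · simp only [hFdef, hlS, if_false, Finset.mem_image]
        obtain ⟨v, hv⟩ := Finset.card_eq_one.mp (hone e heH l)
        refine ⟨v, ?_, hv.symm⟩
        have : v ∈ e ∩ U l := hv ▸ Finset.mem_singleton_self v
        exact (Finset.mem_inter.mp this).2
    · intro e he e' he' heq
      have hall : ∀ l, e ∩ U l = e' ∩ U l := fun l =>
        congrFun (congrFun heq l) (Finset.mem_univ l)
      have heH : e ∈ H := hsH e (Finset.mem_filter.mp (Finset.mem_coe.mp he)).1
      have heH' : e' ∈ H := hsH e' (Finset.mem_filter.mp (Finset.mem_coe.mp he')).1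
      calc e = Finset.univ.biUnion (fun l => e ∩ U l) := hdecomp e heH
        _ = Finset.univ.biUnion (fun l => e' ∩ U l) := by
            apply Finset.biUnion_congr rfl; intro l _; exact hall l
        _ = e' := (hdecomp e' heH').symm
  have hcount : crossCount H W' ≤ (∏ l ∈ Sᶜ, (U l).card) * crossCount (BT H) W := by
    have h1 : s.card ≤ (∏ l ∈ Sᶜ, (U l).card) * (s.image f).card :=
      Finset.card_le_mul_card_image s _ hQfib
    have h2 : (s.image f).card ≤ crossCount (BT H) W := by
      rw [crossCount_eq']
      exact Finset.card_le_card himage_sub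
    calc crossCount H W' = s.card := by rw [crossCount_eq', hsdef]
      _ ≤ (∏ l ∈ Sᶜ, (U l).card) * (s.image f).card := h1
      _ ≤ (∏ l ∈ Sᶜ, (U l).card) * crossCount (BT H) W := Nat.mul_le_mul_left _ h2
  have hS_prod : ∏ l ∈ S, ((W' l).card : ℝ)
      = ((W 0).card : ℝ) * ((W 1).card : ℝ) * ((W 2).card : ℝ) := by
    rw [hSdef]
    rw [Finset.prod_insert (by simp [hij, hik]), Finset.prod_insert (by simp [hjk]),
      Finset.prod_singleton, hW'i, hW'j, hW'k, mul_assoc]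
  have hSc_prod : ∏ l ∈ Sᶜ, ((W' l).card : ℝ) = ((∏ l ∈ Sᶜ, (U l).card : ℕ) : ℝ) := by
    push_cast
    apply Finset.prod_congr rfl
    intro l hl
    have hlS : l ∉ S := Finset.mem_compl.mp hl
    rw [hmemS] at hlS
    push_neg at hlS
    rw [hW'other l hlS.1 hlS.2.1 hlS.2.2]
  set P : ℝ := ((W 0).card : ℝ) * ((W 1).card : ℝ) * ((W 2).card : ℝ) with hPdef
  set Q : ℝ := ((∏ l ∈ Sᶜ, (U l).card : ℕ) : ℝ) with hQdef
  have hprod : ∏ l, ((W' l).card : ℝ) = P * Q := by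
    rw [← Finset.prod_mul_prod_compl S (fun l => ((W' l).card : ℝ)), hS_prod, hSc_prod]
  have hP0 : 0 ≤ P := by
    rw [hPdef]
    exact mul_nonneg (mul_nonneg (Nat.cast_nonneg _) (Nat.cast_nonneg _)) (Nat.cast_nonneg _)
  have hQ0 : 0 ≤ Q := by
    rw [hQdef]
    exact Nat.cast_nonneg _
  have hPQpos : 0 < P * Q := by
    rcases lt_or_eq_of_le (mul_nonneg hP0 hQ0) with h | h
    · exact h
    · exfalso
      have hz : crossDensity H W' = 0 := by
        rw [crossDensity, hprod, ← h, div_zero]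
      rw [hz] at hd'
      linarith
  have hPpos : 0 < P := by
    rcases hP0.lt_or_eq with h | h
    · exact h
    · exfalso; rw [← h, zero_mul] at hPQpos; exact lt_irrefl 0 hPQpos
  have hQpos : 0 < Q := by
    rcases hQ0.lt_or_eq with h | h
    · exact h
    · exfalso; rw [← h, mul_zero] at hPQpos; exact lt_irrefl 0 hPQpos
  have hA : d * (P * Q) ≤ (crossCount H W' : ℝ) := by
    rw [crossDensity, hprod] at hd'
    exact (le_div_iff₀ hPQpos).mp hd'
  have hAB : (crossCount H W' : ℝ) ≤ Q * (crossCount (BT H) W : ℝ) := by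
    calc (crossCount H W' : ℝ)
        ≤ (((∏ l ∈ Sᶜ, (U l).card) * crossCount (BT H) W : ℕ) : ℝ) := by
          exact_mod_cast hcount
      _ = Q * (crossCount (BT H) W : ℝ) := by rw [hQdef]; push_cast; ring
  have hfinal : d * P ≤ (crossCount (BT H) W : ℝ) := by
    have hchain := hA.trans hAB
    have h2 : d * P * Q ≤ (crossCount (BT H) W : ℝ) * Q := by
      calc d * P * Q = d * (P * Q) := by ring
        _ ≤ Q * (crossCount (BT H) W : ℝ) := hchain
        _ = (crossCount (BT H) W : ℝ) * Q := by ring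
    exact le_of_mul_le_mul_right h2 hQpos
  rw [crossDensity, Fin.prod_univ_three]
  rw [le_div_iff₀ (by rw [← hPdef] at *; exact hPpos)]
  calc d * (((W 0).card : ℝ) * ((W 1).card : ℝ) * ((W 2).card : ℝ)) = d * P := by rw [hPdef]
    _ ≤ (crossCount (BT H) W : ℝ) := hfinal
end
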